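/- arXiv:2303.12522 — 6 statements merged into one kernel-verified Lean document; each statement's English description precedes it below -/
import Mathlib

section
/- Let $a<b$, $T>0$, $\mu\in\mathbb{R}$, and let $u\in C^2([0,T]\times[a,b])$, $\theta\in C^{1,2}([0,T]\times[a,b])$ satisfy $u_{tt}-u_{xx}=\mu\theta_x$ and $\theta_t-\theta_{xx}=\mu\theta u_{tx}$ on $(0,T)\times(a,b)$, with boundary conditions $u(\cdot,a)=u(\cdot,b)=0$ and $\theta_x(\cdot,a)=\theta_x(\cdot,b)=0$. Then for all $t\in[0,T]$, the total energy $\frac12\int_a^b u_t^2\,dx+\frac12\int_a^b u_x^2\,dx+\int_a^b\theta\,dx$ is constant in time, i.e. equals its value at $t=0$. -/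
/-!
The energy density `e = u_t²/2 + u_x²/2 + θ` satisfies, by the two equations,
`e_t = u_t u_tt + u_x u_tx + θ_t = (u_t u_x + μ u_t θ + θ_x)_x`, and this flux vanishes at
`x = a, b` because `u_t = 0` there (as `u = 0` on the lateral boundary) and `θ_x = 0`.
Integrating `e_t` over `[0, t] × [a, b]` and exchanging the integrals gives conservation.
The one regularity fact not among the hypotheses is `∂_t u_x = u_tx`: it follows by writing
`u(s, y) - u(0, y) - (u(s, a) - u(0, a))` as the double integral of `u_tx` over
`[0, s] × [a, y]` and differentiating in `y`.
-/

open Set MeasureTheory Function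

section Calculus

variable {E : Type*} [NormedAddCommGroup E] [NormedSpace ℝ E]

theorem intervalIntegral_integral_swap_of_continuousOn {f : ℝ → ℝ → E} {c d e g : ℝ}
    (hcd : c ≤ d) (heg : e ≤ g) (hf : ContinuousOn (uncurry f) (Icc c d ×ˢ Icc e g)) :
    ∫ s in c..d, ∫ x in e..g, f s x = ∫ x in e..g, ∫ s in c..d, f s x := by
  have hint : Integrable (uncurry f)
      ((volume.restrict (Ioc c d)).prod (volume.restrict (Ioc e g))) := by
    rw [Measure.prod_restrict, ← Measure.volume_eq_prod]
    exact (hf.integrableOn_compact (isCompact_Icc.prod isCompact_Icc)).mono_set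
      (prod_mono Ioc_subset_Icc_self Ioc_subset_Icc_self)
  simpa only [intervalIntegral.integral_of_le hcd, intervalIntegral.integral_of_le heg]
    using integral_integral_swap hint

theorem continuousOn_intervalIntegral_of_continuousOn_prod {f : ℝ → ℝ → E}
    {c d e g r₁ r₂ : ℝ} (hf : ContinuousOn (uncurry f) (Icc c d ×ˢ Icc e g))
    (h₁ : r₁ ∈ Icc c d) (h₂ : r₂ ∈ Icc c d) :
    ContinuousOn (fun x => ∫ s in r₁..r₂, f s x) (Icc e g) := by
  rcases lt_or_ge g e with hge | heg
  · simp [Icc_eq_empty_of_lt hge]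
  have hcd : c ≤ d := h₁.1.trans h₁.2
  -- clamping both variables extends `f` continuously to the whole plane
  let F : ℝ → ℝ → E := fun x s => f (projIcc c d hcd s) (projIcc e g heg x)
  have hF : Continuous (uncurry F) :=
    hf.comp_continuous
      (f := fun p : ℝ × ℝ => ((projIcc c d hcd p.2 : ℝ), (projIcc e g heg p.1 : ℝ)))
      (by fun_prop) fun p => ⟨(projIcc c d hcd p.2).2, (projIcc e g heg p.1).2⟩
  refine (intervalIntegral.continuous_parametric_intervalIntegral_of_continuous' hF r₁ r₂
    ).continuousOn.congr fun x hx => intervalIntegral.integral_congr fun s hs => ?_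
  simp [F, projIcc_of_mem hcd (uIcc_subset_Icc h₁ h₂ hs), projIcc_of_mem heg hx]

variable [CompleteSpace E]

theorem integral_eq_sub_of_hasDerivWithinAt_Icc {f f' : ℝ → E} {c d t : ℝ}
    (ht : t ∈ Icc c d)
    (hf : ∀ s ∈ Icc c d, HasDerivWithinAt f (f' s) (Icc c d) s)
    (hint : IntervalIntegrable f' volume c t) :
    ∫ s in c..t, f' s = f t - f c :=
  intervalIntegral.integral_eq_sub_of_hasDerivAt_of_le ht.1
    (fun s hs => (hf s (Icc_subset_Icc_right ht.2 hs)).continuousWithinAt.mono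
      (Icc_subset_Icc_right ht.2))
    (fun s hs => (hf s ⟨hs.1.le, hs.2.le.trans ht.2⟩).hasDerivAt
      (Icc_mem_nhds hs.1 (hs.2.trans_le ht.2)))
    hint

theorem hasDerivWithinAt_integral_Icc {f : ℝ → E} {c d t : ℝ}
    (hf : ContinuousOn f (Icc c d)) (ht : t ∈ Icc c d) :
    HasDerivWithinAt (fun r => ∫ s in c..r, f s) (f t) (Icc c d) t := by
  have : Fact (t ∈ Icc c d) := ⟨ht⟩
  exact intervalIntegral.integral_hasDerivWithinAt_right
    ((hf.mono (Icc_subset_Icc_right ht.2)).intervalIntegrable_of_Icc ht.1)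
    (hf.stronglyMeasurableAtFilter_nhdsWithin measurableSet_Icc t) (hf t ht)

theorem integral_eq_of_integral_partialDeriv_eq_zero {e e' : ℝ → ℝ → E}
    {a b c d t : ℝ} (hab : a ≤ b)
    (he : ∀ s ∈ Icc c d, ∀ x ∈ Icc a b, HasDerivWithinAt (fun r => e r x) (e' s x) (Icc c d) s)
    (he_cont : ContinuousOn (uncurry e) (Icc c d ×ˢ Icc a b))
    (he'_cont : ContinuousOn (uncurry e') (Icc c d ×ˢ Icc a b))
    (hzero : ∀ s ∈ Ioo c d, ∫ x in a..b, e' s x = 0) (ht : t ∈ Icc c d) :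
    ∫ x in a..b, e t x = ∫ x in a..b, e c x := by
  have hc : c ∈ Icc c d := ⟨le_rfl, ht.1.trans ht.2⟩
  rw [← sub_eq_zero, ← intervalIntegral.integral_sub
    ((he_cont.uncurry_left t ht).intervalIntegrable_of_Icc hab)
    ((he_cont.uncurry_left c hc).intervalIntegrable_of_Icc hab)]
  calc ∫ x in a..b, (e t x - e c x)
      = ∫ x in a..b, ∫ s in c..t, e' s x := by
        refine intervalIntegral.integral_congr fun x hx => ?_
        rw [uIcc_of_le hab] at hx
        exact (integral_eq_sub_of_hasDerivWithinAt_Icc ht (fun s hs => he s hs x hx)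
          (((he'_cont.uncurry_right x hx).mono (Icc_subset_Icc_right ht.2)
            ).intervalIntegrable_of_Icc ht.1)).symm
    _ = ∫ s in c..t, ∫ x in a..b, e' s x :=
        (intervalIntegral_integral_swap_of_continuousOn ht.1 hab
          (he'_cont.mono (prod_mono (Icc_subset_Icc_right ht.2) le_rfl))).symm
    _ = ∫ _ in c..t, (0 : E) :=
        intervalIntegral.integral_congr_Ioo_of_le ht.1
          fun s hs => hzero s ⟨hs.1, hs.2.trans_le ht.2⟩
    _ = 0 := by simp

end Calculus

section MixedPartials

variable {f ft fx ftx : ℝ → ℝ → ℝ} {c d e g : ℝ}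

theorem sub_sub_sub_eq_integral_integral_of_mixed
    (hft : ∀ s ∈ Icc c d, ∀ x ∈ Icc e g, HasDerivWithinAt (fun r => f r x) (ft s x) (Icc c d) s)
    (hftx : ∀ s ∈ Icc c d, ∀ x ∈ Icc e g, HasDerivWithinAt (ft s) (ftx s x) (Icc e g) x)
    (hft_cont : ContinuousOn (uncurry ft) (Icc c d ×ˢ Icc e g))
    (hftx_cont : ContinuousOn (uncurry ftx) (Icc c d ×ˢ Icc e g))
    {r y : ℝ} (hr : r ∈ Icc c d) (hy : y ∈ Icc e g) :
    f r y - f c y - (f r e - f c e) = ∫ z in e..y, ∫ q in c..r, ftx q z := by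
  have he : e ∈ Icc e g := ⟨le_rfl, hy.1.trans hy.2⟩
  have hint : ∀ x ∈ Icc e g, IntervalIntegrable (fun q => ft q x) volume c r := fun x hx =>
    ((hft_cont.uncurry_right x hx).mono (Icc_subset_Icc_right hr.2)).intervalIntegrable_of_Icc hr.1
  rw [← integral_eq_sub_of_hasDerivWithinAt_Icc hr (fun s hs => hft s hs y hy) (hint y hy),
    ← integral_eq_sub_of_hasDerivWithinAt_Icc hr (fun s hs => hft s hs e he) (hint e he),
    ← intervalIntegral.integral_sub (hint y hy) (hint e he),
    ← intervalIntegral_integral_swap_of_continuousOn hr.1 hy.1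
      (hftx_cont.mono (prod_mono (Icc_subset_Icc_right hr.2) (Icc_subset_Icc_right hy.2)))]
  refine intervalIntegral.integral_congr fun q hq => ?_
  rw [uIcc_of_le hr.1] at hq
  have hq' : q ∈ Icc c d := ⟨hq.1, hq.2.trans hr.2⟩
  exact (integral_eq_sub_of_hasDerivWithinAt_Icc hy (fun x hx => hftx q hq' x hx)
    (((hftx_cont.uncurry_left q hq').mono (Icc_subset_Icc_right hy.2)).intervalIntegrable_of_Icc
      hy.1)).symm

theorem hasDerivWithinAt_partialDeriv_of_mixed (heg : e < g)
    (hft : ∀ s ∈ Icc c d, ∀ x ∈ Icc e g, HasDerivWithinAt (fun r => f r x) (ft s x) (Icc c d) s)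
    (hfx : ∀ s ∈ Icc c d, ∀ x ∈ Icc e g, HasDerivWithinAt (f s) (fx s x) (Icc e g) x)
    (hftx : ∀ s ∈ Icc c d, ∀ x ∈ Icc e g, HasDerivWithinAt (ft s) (ftx s x) (Icc e g) x)
    (hft_cont : ContinuousOn (uncurry ft) (Icc c d ×ˢ Icc e g))
    (hftx_cont : ContinuousOn (uncurry ftx) (Icc c d ×ˢ Icc e g))
    {s x : ℝ} (hs : s ∈ Icc c d) (hx : x ∈ Icc e g) :
    HasDerivWithinAt (fun r => fx r x) (ftx s x) (Icc c d) s := by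
  have hc : c ∈ Icc c d := ⟨le_rfl, hs.1.trans hs.2⟩
  have hfx_eq : ∀ r ∈ Icc c d, fx r x = fx c x + ∫ q in c..r, ftx q x := by
    intro r hr
    have hdouble := fun y (hy : y ∈ Icc e g) =>
      sub_sub_sub_eq_integral_integral_of_mixed hft hftx hft_cont hftx_cont hr hy
    have hlhs : HasDerivWithinAt (fun y => ∫ z in e..y, ∫ q in c..r, ftx q z)
        (fx r x - fx c x) (Icc e g) x :=
      (((hfx r hr x hx).sub (hfx c hc x hx)).sub_const _).congr
        (fun y hy => (hdouble y hy).symm) (hdouble x hx).symm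
    have hrhs : HasDerivWithinAt (fun y => ∫ z in e..y, ∫ q in c..r, ftx q z)
        (∫ q in c..r, ftx q x) (Icc e g) x :=
      hasDerivWithinAt_integral_Icc
        (continuousOn_intervalIntegral_of_continuousOn_prod hftx_cont hc hr) hx
    linarith [(uniqueDiffOn_Icc heg x hx).eq_deriv _ hlhs hrhs]
  exact ((hasDerivWithinAt_integral_Icc (hftx_cont.uncurry_right x hx) hs).const_add
    (fx c x)).congr hfx_eq (hfx_eq s hs)

end MixedPartials

theorem HasDerivWithinAt.eq_zero_of_eqOn_const {f : ℝ → ℝ} {f' c d s C : ℝ} (hcd : c < d)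
    (hs : s ∈ Icc c d) (hf : HasDerivWithinAt f f' (Icc c d) s)
    (hC : EqOn f (fun _ => C) (Icc c d)) : f' = 0 :=
  (uniqueDiffOn_Icc hcd s hs).eq_deriv _ hf ((hasDerivWithinAt_const s _ C).congr hC (hC hs))

theorem integral_thermoelastic_energy_rate_eq_zero {a b μ : ℝ} (hab : a ≤ b)
    {ut utt ux uxx utx θ θt θx θxx : ℝ → ℝ}
    (hutx : ∀ x ∈ Icc a b, HasDerivWithinAt ut (utx x) (Icc a b) x)
    (huxx : ∀ x ∈ Icc a b, HasDerivWithinAt ux (uxx x) (Icc a b) x)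
    (hθx : ∀ x ∈ Icc a b, HasDerivWithinAt θ (θx x) (Icc a b) x)
    (hθxx : ∀ x ∈ Icc a b, HasDerivWithinAt θx (θxx x) (Icc a b) x)
    (hutx_cont : ContinuousOn utx (Icc a b)) (huxx_cont : ContinuousOn uxx (Icc a b))
    (hθxx_cont : ContinuousOn θxx (Icc a b))
    (hwave : ∀ x ∈ Ioo a b, utt x - uxx x = μ * θx x)
    (hheat : ∀ x ∈ Ioo a b, θt x - θxx x = μ * θ x * utx x)
    (hut_a : ut a = 0) (hut_b : ut b = 0) (hθx_a : θx a = 0) (hθx_b : θx b = 0) :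
    ∫ x in a..b, (ut x * utt x + ux x * utx x + θt x) = 0 := by
  have hflux : ∀ x ∈ Icc a b, HasDerivWithinAt (fun y => ut y * ux y + μ * (ut y * θ y) + θx y)
      (utx x * ux x + ut x * uxx x + μ * (utx x * θ x + ut x * θx x) + θxx x) (Icc a b) x :=
    fun x hx => (((hutx x hx).mul (huxx x hx)).add (((hutx x hx).mul (hθx x hx)).const_mul μ)).add
      (hθxx x hx)
  have hut_cont : ContinuousOn ut (Icc a b) := fun x hx => (hutx x hx).continuousWithinAt
  have hux_cont : ContinuousOn ux (Icc a b) := fun x hx => (huxx x hx).continuousWithinAt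
  have hθ_cont : ContinuousOn θ (Icc a b) := fun x hx => (hθx x hx).continuousWithinAt
  have hθx_cont : ContinuousOn θx (Icc a b) := fun x hx => (hθxx x hx).continuousWithinAt
  calc ∫ x in a..b, (ut x * utt x + ux x * utx x + θt x)
      = ∫ x in a..b, (utx x * ux x + ut x * uxx x + μ * (utx x * θ x + ut x * θx x) + θxx x) :=
        intervalIntegral.integral_congr_Ioo_of_le hab fun x hx => by
          linear_combination ut x * hwave x hx + hheat x hx
    _ = 0 := by
        rw [integral_eq_sub_of_hasDerivWithinAt_Icc ⟨hab, le_rfl⟩ hflux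
          (ContinuousOn.intervalIntegrable_of_Icc hab (by fun_prop))]
        simp [hut_a, hut_b, hθx_a, hθx_b]

theorem stmt_0_general (a b T μ : ℝ) (hab : a < b)
    (u ut utt ux uxx utx θ θt θx θxx : ℝ → ℝ → ℝ)
    (hut : ∀ t ∈ Icc 0 T, ∀ x ∈ Icc a b,
      HasDerivWithinAt (fun s => u s x) (ut t x) (Icc 0 T) t)
    (hutt : ∀ t ∈ Icc 0 T, ∀ x ∈ Icc a b,
      HasDerivWithinAt (fun s => ut s x) (utt t x) (Icc 0 T) t)
    (hux : ∀ t ∈ Icc 0 T, ∀ x ∈ Icc a b,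
      HasDerivWithinAt (u t) (ux t x) (Icc a b) x)
    (huxx : ∀ t ∈ Icc 0 T, ∀ x ∈ Icc a b,
      HasDerivWithinAt (ux t) (uxx t x) (Icc a b) x)
    (hutx : ∀ t ∈ Icc 0 T, ∀ x ∈ Icc a b,
      HasDerivWithinAt (ut t) (utx t x) (Icc a b) x)
    (hθt : ∀ t ∈ Icc 0 T, ∀ x ∈ Icc a b,
      HasDerivWithinAt (fun s => θ s x) (θt t x) (Icc 0 T) t)
    (hθx : ∀ t ∈ Icc 0 T, ∀ x ∈ Icc a b,
      HasDerivWithinAt (θ t) (θx t x) (Icc a b) x)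
    (hθxx : ∀ t ∈ Icc 0 T, ∀ x ∈ Icc a b,
      HasDerivWithinAt (θx t) (θxx t x) (Icc a b) x)
    (hcont : ContinuousOn (fun p : ℝ × ℝ =>
      (utt p.1 p.2, uxx p.1 p.2, utx p.1 p.2, θt p.1 p.2, θxx p.1 p.2, θx p.1 p.2,
        ut p.1 p.2, ux p.1 p.2, θ p.1 p.2)) (Icc 0 T ×ˢ Icc a b))
    (hwave : ∀ t ∈ Ioo 0 T, ∀ x ∈ Ioo a b, utt t x - uxx t x = μ * θx t x)
    (hheat : ∀ t ∈ Ioo 0 T, ∀ x ∈ Ioo a b, θt t x - θxx t x = μ * θ t x * utx t x)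
    (hbd : ∀ t ∈ Icc 0 T, u t a = 0 ∧ u t b = 0 ∧ θx t a = 0 ∧ θx t b = 0) :
    ∀ t ∈ Icc 0 T,
      (1/2) * (∫ x in a..b, (ut t x) ^ 2) + (1/2) * (∫ x in a..b, (ux t x) ^ 2)
          + (∫ x in a..b, θ t x)
        = (1/2) * (∫ x in a..b, (ut 0 x) ^ 2) + (1/2) * (∫ x in a..b, (ux 0 x) ^ 2)
          + (∫ x in a..b, θ 0 x) := by
  intro t ht
  have hutt_c : ContinuousOn (uncurry utt) (Icc 0 T ×ˢ Icc a b) := hcont.fst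
  have huxx_c : ContinuousOn (uncurry uxx) (Icc 0 T ×ˢ Icc a b) := hcont.snd.fst
  have hutx_c : ContinuousOn (uncurry utx) (Icc 0 T ×ˢ Icc a b) := hcont.snd.snd.fst
  have hθt_c : ContinuousOn (uncurry θt) (Icc 0 T ×ˢ Icc a b) := hcont.snd.snd.snd.fst
  have hθxx_c : ContinuousOn (uncurry θxx) (Icc 0 T ×ˢ Icc a b) := hcont.snd.snd.snd.snd.fst
  have hut_c : ContinuousOn (uncurry ut) (Icc 0 T ×ˢ Icc a b) := hcont.snd.snd.snd.snd.snd.snd.fst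
  have hux_c : ContinuousOn (uncurry ux) (Icc 0 T ×ˢ Icc a b) :=
    hcont.snd.snd.snd.snd.snd.snd.snd.fst
  have hθ_c : ContinuousOn (uncurry θ) (Icc 0 T ×ˢ Icc a b) :=
    hcont.snd.snd.snd.snd.snd.snd.snd.snd
  have hdensity : ∀ s ∈ Icc 0 T, ∀ x ∈ Icc a b,
      HasDerivWithinAt (fun r => 1/2 * ut r x ^ 2 + 1/2 * ux r x ^ 2 + θ r x)
        (ut s x * utt s x + ux s x * utx s x + θt s x) (Icc 0 T) s := fun s hs x hx => by
    have hux_t := hasDerivWithinAt_partialDeriv_of_mixed hab hut hux hutx hut_c hutx_c hs hx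
    refine ((((hutt s hs x hx).pow 2).const_mul (1/2 : ℝ)).add
      ((hux_t.pow 2).const_mul (1/2 : ℝ))).add (hθt s hs x hx) |>.congr_deriv ?_
    norm_num
    ring
  have hsplit : ∀ s ∈ Icc 0 T, ∫ x in a..b, (1/2 * ut s x ^ 2 + 1/2 * ux s x ^ 2 + θ s x)
      = 1/2 * (∫ x in a..b, ut s x ^ 2) + 1/2 * (∫ x in a..b, ux s x ^ 2) + ∫ x in a..b, θ s x := by
    intro s hs
    have := hut_c.uncurry_left s hs
    have := hux_c.uncurry_left s hs
    have := hθ_c.uncurry_left s hs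
    rw [intervalIntegral.integral_add, intervalIntegral.integral_add,
      intervalIntegral.integral_const_mul, intervalIntegral.integral_const_mul] <;>
    exact ContinuousOn.intervalIntegrable_of_Icc hab.le (by fun_prop)
  rw [← hsplit t ht, ← hsplit 0 ⟨le_rfl, ht.1.trans ht.2⟩]
  refine integral_eq_of_integral_partialDeriv_eq_zero hab.le hdensity (by fun_prop)
    (by fun_prop) (fun s hs => ?_) ht
  have hs' : s ∈ Icc 0 T := Ioo_subset_Icc_self hs
  exact integral_thermoelastic_energy_rate_eq_zero hab.le (hutx s hs') (huxx s hs') (hθx s hs')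
    (hθxx s hs') (hutx_c.uncurry_left s hs') (huxx_c.uncurry_left s hs')
    (hθxx_c.uncurry_left s hs') (hwave s hs) (hheat s hs)
    ((hut s hs' a ⟨le_rfl, hab.le⟩).eq_zero_of_eqOn_const (hs.1.trans hs.2) hs'
      fun r hr => (hbd r hr).1)
    ((hut s hs' b ⟨hab.le, le_rfl⟩).eq_zero_of_eqOn_const (hs.1.trans hs.2) hs'
      fun r hr => (hbd r hr).2.1)
    (hbd s hs').2.2.1 (hbd s hs').2.2.2

theorem stmt_0 (a b T μ : ℝ) (hab : a < b) (hT : 0 < T)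
    (u ut utt ux uxx utx θ θt θx θxx : ℝ → ℝ → ℝ)
    (hut : ∀ t ∈ Icc 0 T, ∀ x ∈ Icc a b,
      HasDerivWithinAt (fun s => u s x) (ut t x) (Icc 0 T) t)
    (hutt : ∀ t ∈ Icc 0 T, ∀ x ∈ Icc a b,
      HasDerivWithinAt (fun s => ut s x) (utt t x) (Icc 0 T) t)
    (hux : ∀ t ∈ Icc 0 T, ∀ x ∈ Icc a b,
      HasDerivWithinAt (u t) (ux t x) (Icc a b) x)
    (huxx : ∀ t ∈ Icc 0 T, ∀ x ∈ Icc a b,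
      HasDerivWithinAt (ux t) (uxx t x) (Icc a b) x)
    (hutx : ∀ t ∈ Icc 0 T, ∀ x ∈ Icc a b,
      HasDerivWithinAt (ut t) (utx t x) (Icc a b) x)
    (hθt : ∀ t ∈ Icc 0 T, ∀ x ∈ Icc a b,
      HasDerivWithinAt (fun s => θ s x) (θt t x) (Icc 0 T) t)
    (hθx : ∀ t ∈ Icc 0 T, ∀ x ∈ Icc a b,
      HasDerivWithinAt (θ t) (θx t x) (Icc a b) x)
    (hθxx : ∀ t ∈ Icc 0 T, ∀ x ∈ Icc a b,
      HasDerivWithinAt (θx t) (θxx t x) (Icc a b) x)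
    (hcont : ContinuousOn (fun p : ℝ × ℝ =>
      (utt p.1 p.2, uxx p.1 p.2, utx p.1 p.2, θt p.1 p.2, θxx p.1 p.2, θx p.1 p.2,
        ut p.1 p.2, ux p.1 p.2, θ p.1 p.2)) (Icc 0 T ×ˢ Icc a b))
    (hwave : ∀ t ∈ Ioo 0 T, ∀ x ∈ Ioo a b, utt t x - uxx t x = μ * θx t x)
    (hheat : ∀ t ∈ Ioo 0 T, ∀ x ∈ Ioo a b, θt t x - θxx t x = μ * θ t x * utx t x)
    (hbd : ∀ t ∈ Icc 0 T, u t a = 0 ∧ u t b = 0 ∧ θx t a = 0 ∧ θx t b = 0) :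
    ∀ t ∈ Icc 0 T,
      (1/2) * (∫ x in a..b, (ut t x) ^ 2) + (1/2) * (∫ x in a..b, (ux t x) ^ 2)
          + (∫ x in a..b, θ t x)
        = (1/2) * (∫ x in a..b, (ut 0 x) ^ 2) + (1/2) * (∫ x in a..b, (ux 0 x) ^ 2)
          + (∫ x in a..b, θ 0 x) :=
  stmt_0_general a b T μ hab u ut utt ux uxx utx θ θt θx θxx hut hutt hux huxx hutx hθt hθx hθxx
    hcont hwave hheat hbd
end

section
/- Let $a<b$ and let $\psi\in C^2([a,b])$ be a positive function with $\psi'(a)=\psi'(b)=0$. Then $\int_a^b \left[(\psi^{1/2})''\right]^2\,dx \le \frac{13}{8}\int_a^b \psi\left[(\log\psi)''\right]^2\,dx$. -/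
/-!
With `p = ψ`, `u = ψ'`, `v = ψ''`, the two integrands are
`((√ψ)'')² = (2pv - u²)² / (16p³)` and `ψ ((log ψ)'')² = (pv - u²)² / p³`.
Adding half of the exact derivative `(u³/p²)' = (3u²v p - 2u⁴)/p³`, whose integral vanishes
because `u(a) = u(b) = 0`, the difference of the right and left integrands becomes
`(22X² - 24XY + 9Y²) / (16p³)` with `X = pv`, `Y = u²`; this quadratic form is positive
definite (`24² < 4·22·9`), so after this correction the inequality holds pointwise.
-/

open Set MeasureTheory intervalIntegral

section SecondDerivatives

variable {s : Set ℝ} {ψ ψ' : ℝ → ℝ} {x v : ℝ}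

theorem derivWithin_derivWithin_eq_of_hasDerivWithinAt {f f' : ℝ → ℝ} (hs : UniqueDiffOn ℝ s)
    (hf : ∀ y ∈ s, HasDerivWithinAt f (f' y) s y) (hx : x ∈ s)
    (hf' : HasDerivWithinAt f' v s x) :
    derivWithin (derivWithin f s) s x = v := by
  have heq : EqOn (derivWithin f s) f' s := fun y hy => (hf y hy).derivWithin (hs y hy)
  rw [derivWithin_congr heq (heq hx)]
  exact hf'.derivWithin (hs x hx)

theorem hasDerivWithinAt_deriv_sqrt_comp (hψ : HasDerivWithinAt ψ (ψ' x) s x)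
    (hψ' : HasDerivWithinAt ψ' v s x) (hpos : 0 < ψ x) :
    HasDerivWithinAt (fun y => ψ' y / (2 * √(ψ y)))
      ((2 * ψ x * v - ψ' x ^ 2) / (4 * ψ x * √(ψ x))) s x := by
  have hsqrt : 0 < √(ψ x) := Real.sqrt_pos.2 hpos
  refine (hψ'.div ((hψ.sqrt hpos.ne').const_mul 2) (by positivity)).congr_deriv ?_
  have hsq : √(ψ x) ^ 2 = ψ x := Real.sq_sqrt hpos.le
  field_simp
  rw [hsq]
  ring

theorem hasDerivWithinAt_deriv_log_comp (hψ : HasDerivWithinAt ψ (ψ' x) s x)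
    (hψ' : HasDerivWithinAt ψ' v s x) (hne : ψ x ≠ 0) :
    HasDerivWithinAt (fun y => ψ' y / ψ y) ((ψ x * v - ψ' x ^ 2) / ψ x ^ 2) s x :=
  (hψ'.div hψ hne).congr_deriv (by ring)

theorem hasDerivWithinAt_cube_div_sq (hψ : HasDerivWithinAt ψ (ψ' x) s x)
    (hψ' : HasDerivWithinAt ψ' v s x) (hne : ψ x ≠ 0) :
    HasDerivWithinAt (fun y => ψ' y ^ 3 / ψ y ^ 2)
      ((3 * ψ' x ^ 2 * v * ψ x - 2 * ψ' x ^ 4) / ψ x ^ 3) s x := by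
  refine ((hψ'.pow 3).div (hψ.pow 2) (pow_ne_zero 2 hne)).congr_deriv ?_
  simp only [Pi.pow_apply]
  field_simp
  ring

theorem derivWithin_derivWithin_sqrt_comp (hs : UniqueDiffOn ℝ s)
    (hψ : ∀ y ∈ s, HasDerivWithinAt ψ (ψ' y) s y) (hpos : ∀ y ∈ s, 0 < ψ y) (hx : x ∈ s)
    (hψ' : HasDerivWithinAt ψ' v s x) :
    derivWithin (derivWithin (fun y => √(ψ y)) s) s x
      = (2 * ψ x * v - ψ' x ^ 2) / (4 * ψ x * √(ψ x)) :=
  derivWithin_derivWithin_eq_of_hasDerivWithinAt hs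
    (fun y hy => (hψ y hy).sqrt (hpos y hy).ne') hx
    (hasDerivWithinAt_deriv_sqrt_comp (hψ x hx) hψ' (hpos x hx))

theorem derivWithin_derivWithin_log_comp (hs : UniqueDiffOn ℝ s)
    (hψ : ∀ y ∈ s, HasDerivWithinAt ψ (ψ' y) s y) (hpos : ∀ y ∈ s, 0 < ψ y) (hx : x ∈ s)
    (hψ' : HasDerivWithinAt ψ' v s x) :
    derivWithin (derivWithin (fun y => Real.log (ψ y)) s) s x
      = (ψ x * v - ψ' x ^ 2) / ψ x ^ 2 :=
  derivWithin_derivWithin_eq_of_hasDerivWithinAt hs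
    (fun y hy => (hψ y hy).log (hpos y hy).ne') hx
    (hasDerivWithinAt_deriv_log_comp (hψ x hx) hψ' (hpos x hx).ne')

end SecondDerivatives

theorem sq_sqrt_secondDeriv_le {p : ℝ} (hp : 0 < p) (u v : ℝ) :
    ((2 * p * v - u ^ 2) / (4 * p * √p)) ^ 2 ≤
      13 / 8 * (p * ((p * v - u ^ 2) / p ^ 2) ^ 2)
        + (3 * u ^ 2 * v * p - 2 * u ^ 4) / p ^ 3 / 2 := by
  have hsq : √p ^ 2 = p := Real.sq_sqrt hp.le
  have key : 13 / 8 * (p * ((p * v - u ^ 2) / p ^ 2) ^ 2)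
      + (3 * u ^ 2 * v * p - 2 * u ^ 4) / p ^ 3 / 2 - ((2 * p * v - u ^ 2) / (4 * p * √p)) ^ 2
      = (22 * (p * v) ^ 2 - 24 * (p * v) * u ^ 2 + 9 * (u ^ 2) ^ 2) / (16 * p ^ 3) := by
    rw [div_pow _ (4 * p * √p), mul_pow (4 * p), hsq]
    field_simp
    ring
  have hform : 0 ≤ 22 * (p * v) ^ 2 - 24 * (p * v) * u ^ 2 + 9 * (u ^ 2) ^ 2 := by
    nlinarith [sq_nonneg (11 * (p * v) - 6 * u ^ 2), sq_nonneg (u ^ 2)]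
  have : 0 ≤ (22 * (p * v) ^ 2 - 24 * (p * v) * u ^ 2 + 9 * (u ^ 2) ^ 2) / (16 * p ^ 3) :=
    div_nonneg hform (by positivity)
  linarith

theorem integral_deriv_cube_div_sq_eq_zero {a b : ℝ} (hab : a ≤ b) {ψ ψ' ψ'' : ℝ → ℝ}
    (hpos : ∀ x ∈ Icc a b, 0 < ψ x)
    (hψ : ∀ x ∈ Icc a b, HasDerivWithinAt ψ (ψ' x) (Icc a b) x)
    (hψ' : ∀ x ∈ Icc a b, HasDerivWithinAt ψ' (ψ'' x) (Icc a b) x)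
    (hcont : ContinuousOn ψ'' (Icc a b)) (ha : ψ' a = 0) (hb : ψ' b = 0) :
    ∫ x in a..b, (3 * ψ' x ^ 2 * ψ'' x * ψ x - 2 * ψ' x ^ 4) / ψ x ^ 3 = 0 := by
  have hcψ := HasDerivWithinAt.continuousOn hψ
  have hcψ' := HasDerivWithinAt.continuousOn hψ'
  have hcF : ContinuousOn (fun x => ψ' x ^ 3 / ψ x ^ 2) (Icc a b) := by
    fun_prop (disch := intro x hx; have := hpos x hx; positivity)
  have hcF' : ContinuousOn (fun x => (3 * ψ' x ^ 2 * ψ'' x * ψ x - 2 * ψ' x ^ 4) / ψ x ^ 3)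
      (uIcc a b) := by
    rw [uIcc_of_le hab]
    fun_prop (disch := intro x hx; have := hpos x hx; positivity)
  have hderiv : ∀ x ∈ Ioo a b, HasDerivAt (fun x => ψ' x ^ 3 / ψ x ^ 2)
      ((3 * ψ' x ^ 2 * ψ'' x * ψ x - 2 * ψ' x ^ 4) / ψ x ^ 3) x := fun x hx =>
    have hx' := Ioo_subset_Icc_self hx
    (hasDerivWithinAt_cube_div_sq (hψ x hx') (hψ' x hx') (hpos x hx').ne').hasDerivAt
      (Icc_mem_nhds hx.1 hx.2)
  rw [integral_eq_sub_of_hasDerivAt_of_le hab hcF hderiv hcF'.intervalIntegrable, ha, hb]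
  simp

theorem stmt_1 (a b : ℝ) (hab : a < b) (ψ ψ' ψ'' : ℝ → ℝ)
    (hpos : ∀ x ∈ Icc a b, 0 < ψ x)
    (hψ' : ∀ x ∈ Icc a b, HasDerivWithinAt ψ (ψ' x) (Icc a b) x)
    (hψ'' : ∀ x ∈ Icc a b, HasDerivWithinAt ψ' (ψ'' x) (Icc a b) x)
    (hcont : ContinuousOn ψ'' (Icc a b))
    (hba : ψ' a = 0) (hbb : ψ' b = 0) :
    (∫ x in a..b,
        (derivWithin (derivWithin (fun y => Real.sqrt (ψ y)) (Icc a b)) (Icc a b) x) ^ 2)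
      ≤ (13/8) * ∫ x in a..b,
          ψ x * (derivWithin (derivWithin (fun y => Real.log (ψ y)) (Icc a b)) (Icc a b) x) ^ 2 := by
  have hU := uniqueDiffOn_Icc hab
  have hcψ := HasDerivWithinAt.continuousOn hψ'
  have hcψ' := HasDerivWithinAt.continuousOn hψ''
  have hint {f : ℝ → ℝ} (hf : ContinuousOn f (Icc a b)) : IntervalIntegrable f volume a b :=
    (uIcc_of_le hab.le ▸ hf).intervalIntegrable
  have hsqrt : (∫ x in a..b,
      (derivWithin (derivWithin (fun y => Real.sqrt (ψ y)) (Icc a b)) (Icc a b) x) ^ 2)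
      = ∫ x in a..b, ((2 * ψ x * ψ'' x - ψ' x ^ 2) / (4 * ψ x * √(ψ x))) ^ 2 :=
    integral_congr fun x hx => by
      rw [uIcc_of_le hab.le] at hx
      simp only [derivWithin_derivWithin_sqrt_comp hU hψ' hpos hx (hψ'' x hx)]
  have hlog : (∫ x in a..b,
      ψ x * (derivWithin (derivWithin (fun y => Real.log (ψ y)) (Icc a b)) (Icc a b) x) ^ 2)
      = ∫ x in a..b, ψ x * ((ψ x * ψ'' x - ψ' x ^ 2) / ψ x ^ 2) ^ 2 :=
    integral_congr fun x hx => by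
      rw [uIcc_of_le hab.le] at hx
      simp only [derivWithin_derivWithin_log_comp hU hψ' hpos hx (hψ'' x hx)]
  rw [hsqrt, hlog]
  calc _ ≤ ∫ x in a..b, (13 / 8 * (ψ x * ((ψ x * ψ'' x - ψ' x ^ 2) / ψ x ^ 2) ^ 2)
          + (3 * ψ' x ^ 2 * ψ'' x * ψ x - 2 * ψ' x ^ 4) / ψ x ^ 3 / 2) :=
        integral_mono_on hab.le
          (hint (by fun_prop (disch := intro x hx; have := hpos x hx; positivity)))
          (hint (by fun_prop (disch := intro x hx; have := hpos x hx; positivity)))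
          (fun x hx => sq_sqrt_secondDeriv_le (hpos x hx) _ _)
    _ = 13 / 8 * ∫ x in a..b, ψ x * ((ψ x * ψ'' x - ψ' x ^ 2) / ψ x ^ 2) ^ 2 := by
        rw [intervalIntegral.integral_add, intervalIntegral.integral_const_mul,
          intervalIntegral.integral_div,
          integral_deriv_cube_div_sq_eq_zero hab.le hpos hψ' hψ'' hcont hba hbb]
        · ring
        all_goals exact hint (by fun_prop (disch := intro x hx; have := hpos x hx; positivity))
end

section
/- Let $a<b$ and $\theta\in C^2([a,b])$ be positive with $\theta'(a)=\theta'(b)=0$ and $\int_a^b\theta\,dx\le E$ for some constant $E>0$. Then $\left(\int_a^b\left((\theta^{1/2})'\right)^2dx\right)^2 \le \frac{13}{8}\,E\int_a^b\theta\left[(\log\theta)''\right]^2dx$. -/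
open Set

/-!
With `u = θ' / θ` one has `((θ^{1/2})')² = θ u² / 4` and `(log θ)'' = u'`. Since
`θ u' = θ'' - θ u²` and `∫ θ'' = 0` by the Neumann conditions, `∫ θ u² = -∫ θ u'`, and
Cauchy–Schwarz against the weight `θ` gives `(∫ θ u')² ≤ (∫ θ) (∫ θ u'²)`. Hence the left-hand
side is at most `E/16 · ∫ θ u'²`.
-/

theorem sq_intervalIntegral_le_mul_integral_sq_div {a b : ℝ} (hab : a ≤ b) {w g : ℝ → ℝ}
    (hw : ∀ x ∈ Icc a b, 0 < w x) (hwi : IntervalIntegrable w MeasureTheory.volume a b)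
    (hgi : IntervalIntegrable g MeasureTheory.volume a b)
    (hgwi : IntervalIntegrable (fun x => g x ^ 2 / w x) MeasureTheory.volume a b) :
    (∫ x in a..b, g x) ^ 2 ≤ (∫ x in a..b, w x) * ∫ x in a..b, g x ^ 2 / w x := by
  set W := ∫ x in a..b, w x
  set G := ∫ x in a..b, g x
  set Q := ∫ x in a..b, g x ^ 2 / w x
  -- discriminant argument: `W t² + 2 G t + Q` is the integral of `w (t + g / w)² ≥ 0`
  have hquad : ∀ t : ℝ, 0 ≤ W * (t * t) + (2 * G) * t + Q := by
    intro t
    have hint : (∫ x in a..b, t ^ 2 * w x + 2 * t * g x + g x ^ 2 / w x)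
        = W * (t * t) + (2 * G) * t + Q := by
      rw [intervalIntegral.integral_add ((hwi.const_mul _).add (hgi.const_mul _)) hgwi,
        intervalIntegral.integral_add (hwi.const_mul _) (hgi.const_mul _),
        intervalIntegral.integral_const_mul, intervalIntegral.integral_const_mul]
      ring
    rw [← hint]
    refine intervalIntegral.integral_nonneg hab fun x hx => ?_
    have hwx := hw x hx
    have hsq : t ^ 2 * w x + 2 * t * g x + g x ^ 2 / w x = w x * (t + g x / w x) ^ 2 := by
      field_simp
      ring
    rw [hsq]
    positivity
  have hdisc := discrim_le_zero hquad
  rw [discrim] at hdisc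
  nlinarith

section Derivatives

variable {θ : ℝ → ℝ} {s : Set ℝ}

theorem sq_derivWithin_sqrt_eq {x d : ℝ} (hs : UniqueDiffWithinAt ℝ s x) (hx : 0 < θ x)
    (hθ : HasDerivWithinAt θ d s x) :
    derivWithin (fun y => Real.sqrt (θ y)) s x ^ 2 = d ^ 2 / θ x / 4 := by
  have hd : HasDerivWithinAt (fun y => Real.sqrt (θ y)) (1 / (2 * Real.sqrt (θ x)) * d) s x :=
    (Real.hasDerivAt_sqrt hx.ne').comp_hasDerivWithinAt x hθ
  rw [hd.derivWithin hs, mul_pow, div_pow, mul_pow, Real.sq_sqrt hx.le]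
  ring

theorem derivWithin_derivWithin_log_eq {θ' θ'' : ℝ → ℝ} (hs : UniqueDiffOn ℝ s)
    (hpos : ∀ x ∈ s, 0 < θ x) (hθ' : ∀ x ∈ s, HasDerivWithinAt θ (θ' x) s x)
    {x : ℝ} (hx : x ∈ s) (hθ'' : HasDerivWithinAt θ' (θ'' x) s x) :
    derivWithin (derivWithin (fun y => Real.log (θ y)) s) s x
      = (θ'' x - θ' x ^ 2 / θ x) / θ x := by
  have hlog : EqOn (derivWithin (fun y => Real.log (θ y)) s) (fun y => θ' y / θ y) s := by
    intro y hy
    exact ((hθ' y hy).log (hpos y hy).ne').derivWithin (hs y hy)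
  have hθx := (hpos x hx).ne'
  rw [derivWithin_congr hlog (hlog hx), (hθ''.fun_div (hθ' x hx) hθx).derivWithin (hs x hx)]
  field_simp

end Derivatives

theorem stmt_5_general (a b E : ℝ) (hab : a < b) (θ θ' θ'' : ℝ → ℝ)
    (hpos : ∀ x ∈ Icc a b, 0 < θ x)
    (hθ' : ∀ x ∈ Icc a b, HasDerivWithinAt θ (θ' x) (Icc a b) x)
    (hθ'' : ∀ x ∈ Icc a b, HasDerivWithinAt θ' (θ'' x) (Icc a b) x)
    (hcont : ContinuousOn θ'' (Icc a b))
    (hba : θ' a = 0) (hbb : θ' b = 0)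
    (hmass : (∫ x in a..b, θ x) ≤ E) :
    (∫ x in a..b, (derivWithin (fun y => Real.sqrt (θ y)) (Icc a b) x) ^ 2) ^ 2
      ≤ (13/8) * E * ∫ x in a..b,
          θ x * (derivWithin (derivWithin (fun y => Real.log (θ y)) (Icc a b)) (Icc a b) x) ^ 2 := by
  have hus : UniqueDiffOn ℝ (Icc a b) := uniqueDiffOn_Icc hab
  have hθc : ContinuousOn θ (Icc a b) := fun x hx => (hθ' x hx).continuousWithinAt
  have hθ'c : ContinuousOn θ' (Icc a b) := fun x hx => (hθ'' x hx).continuousWithinAt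
  have hne : ∀ x ∈ Icc a b, θ x ≠ 0 := fun x hx => (hpos x hx).ne'
  have hJc : ContinuousOn (fun x => θ' x ^ 2 / θ x) (Icc a b) := (hθ'c.pow 2).div hθc hne
  have hhc : ContinuousOn (fun x => θ'' x - θ' x ^ 2 / θ x) (Icc a b) := hcont.sub hJc
  have integrable {f : ℝ → ℝ} (hf : ContinuousOn f (Icc a b)) :
      IntervalIntegrable f MeasureTheory.volume a b :=
    hf.intervalIntegrable_of_Icc hab.le
  have hLHS : (∫ x in a..b, (derivWithin (fun y => Real.sqrt (θ y)) (Icc a b) x) ^ 2)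
      = (∫ x in a..b, θ' x ^ 2 / θ x) / 4 := by
    rw [← intervalIntegral.integral_div]
    refine intervalIntegral.integral_congr fun x hx => ?_
    rw [uIcc_of_le hab.le] at hx
    exact sq_derivWithin_sqrt_eq (hus x hx) (hpos x hx) (hθ' x hx)
  have hRHS : (∫ x in a..b,
      θ x * (derivWithin (derivWithin (fun y => Real.log (θ y)) (Icc a b)) (Icc a b) x) ^ 2)
      = ∫ x in a..b, (θ'' x - θ' x ^ 2 / θ x) ^ 2 / θ x := by
    refine intervalIntegral.integral_congr fun x hx => ?_
    rw [uIcc_of_le hab.le] at hx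
    simp only [derivWithin_derivWithin_log_eq hus hpos hθ' hx (hθ'' x hx)]
    field_simp [hne x hx]
  have hNeumann : (∫ x in a..b, θ'' x) = 0 := by
    rw [intervalIntegral.integral_eq_sub_of_hasDeriv_right_of_le hab.le hθ'c
      (fun x hx => ((hθ'' x (Ioo_subset_Icc_self hx)).hasDerivAt
        (Icc_mem_nhds hx.1 hx.2)).hasDerivWithinAt) (integrable hcont), hba, hbb, sub_zero]
  have hparts : (∫ x in a..b, θ'' x - θ' x ^ 2 / θ x) = -∫ x in a..b, θ' x ^ 2 / θ x := by
    rw [intervalIntegral.integral_sub (integrable hcont) (integrable hJc), hNeumann, zero_sub]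
  have hCS := sq_intervalIntegral_le_mul_integral_sq_div hab.le hpos (integrable hθc)
    (integrable hhc) (integrable ((hhc.pow 2).div hθc hne))
  have hK : 0 ≤ ∫ x in a..b, (θ'' x - θ' x ^ 2 / θ x) ^ 2 / θ x :=
    intervalIntegral.integral_nonneg hab.le fun x hx => div_nonneg (sq_nonneg _) (hpos x hx).le
  rw [hparts, neg_sq] at hCS
  rw [hLHS, hRHS]
  nlinarith [mul_le_mul_of_nonneg_right hmass hK]

theorem stmt_5 (a b E : ℝ) (hab : a < b) (hE : 0 < E) (θ θ' θ'' : ℝ → ℝ)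
    (hpos : ∀ x ∈ Icc a b, 0 < θ x)
    (hθ' : ∀ x ∈ Icc a b, HasDerivWithinAt θ (θ' x) (Icc a b) x)
    (hθ'' : ∀ x ∈ Icc a b, HasDerivWithinAt θ' (θ'' x) (Icc a b) x)
    (hcont : ContinuousOn θ'' (Icc a b))
    (hba : θ' a = 0) (hbb : θ' b = 0)
    (hmass : (∫ x in a..b, θ x) ≤ E) :
    (∫ x in a..b, (derivWithin (fun y => Real.sqrt (θ y)) (Icc a b) x) ^ 2) ^ 2
      ≤ (13/8) * E * ∫ x in a..b,
          θ x * (derivWithin (derivWithin (fun y => Real.log (θ y)) (Icc a b)) (Icc a b) x) ^ 2 :=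
  stmt_5_general a b E hab θ θ' θ'' hpos hθ' hθ'' hcont hba hbb hmass
end

section
/- Let $a<b$, $T>0$, $\mu\in\mathbb{R}$, and let $u\in C^3([0,T]\times[a,b])$, $\theta\in C^{1,2}([0,T]\times[a,b])$ with $\theta>0$ solve $u_{tt}-u_{xx}=\mu\theta_x$, $\theta_t-\theta_{xx}=\mu\theta u_{tx}$ on $(0,T)\times(a,b)$ with boundary conditions $u(\cdot,a)=u(\cdot,b)=0$, $\theta_x(\cdot,a)=\theta_x(\cdot,b)=0$. Then for all $t\in(0,T)$: $\frac12\frac{d}{dt}\left(\int_a^b\frac{\theta_x^2}{\theta}dx+\int_a^b u_{tx}^2dx+\int_a^b u_{xx}^2dx\right) = -\int_a^b\theta\left[(\log\theta)_{xx}\right]^2dx + \frac{\mu}{2}\int_a^b\frac{\theta_x^2}{\theta}u_{tx}\,dx$. -/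
/-!
Differentiating under the integral sign, the time derivative of the left-hand side is
`∫ ∂ₜ(θₓ²/θ) - 2 ∫ uₜₜ uₜₓₓ + 2 ∫ uₓₓ uₜₓₓ`. The middle term needs care: `uₜₓ` is not known to be
differentiable in time, so `∫ uₜₓ(s)² - ∫ uₜₓ(t)²` is first integrated by parts into
`-∫ (uₜ(s) - uₜ(t)) (uₜₓₓ(s) + uₜₓₓ(t))`, using `uₜ = 0` on the boundary (inherited from `u = 0`).
The identities `∂ₜ uₓₓ = uₜₓₓ` and `∂ₓ θₜ = θₜₓ` come from the symmetry of mixed partial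
derivatives when one of them is continuous. After substituting both equations, the difference of the
two sides is the integral of the `x`-derivative of `2 θₜ θₓ / θ - θₓ³ / θ² - 2 μ θₓ uₜₓ`, which
vanishes at `a` and `b` together with `θₓ`.
-/

open Set Filter Topology MeasureTheory Function
open scoped Interval

theorem norm_rectangle_sub_le {f f₁ f₁₂ : ℝ → ℝ → ℝ} {t₀ t x₀ x L c : ℝ}
    (h₁ : ∀ s ∈ [[t₀, t]], ∀ y ∈ [[x₀, x]], HasDerivAt (f · y) (f₁ s y) s)
    (h₁₂ : ∀ s ∈ [[t₀, t]], ∀ y ∈ [[x₀, x]], HasDerivAt (f₁ s) (f₁₂ s y) y)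
    (hc : ∀ s ∈ [[t₀, t]], ∀ y ∈ [[x₀, x]], ‖f₁₂ s y - L‖ ≤ c) :
    ‖(f t x - f t₀ x) - (f t x₀ - f t₀ x₀) - (t - t₀) * (x - x₀) * L‖
      ≤ c * ‖x - x₀‖ * ‖t - t₀‖ := by
  have hslice : ∀ s ∈ [[t₀, t]], ‖f₁ s x - f₁ s x₀ - (x - x₀) * L‖ ≤ c * ‖x - x₀‖ := by
    intro s hs
    convert (convex_uIcc x₀ x).norm_image_sub_le_of_norm_hasDerivWithin_le
      (f := fun y => f₁ s y - y * L)
      (fun y hy => ((h₁₂ s hs y hy).sub (hasDerivAt_mul_const L)).hasDerivWithinAt)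
      (hc s hs) left_mem_uIcc right_mem_uIcc using 1
    congr 1; ring
  convert (convex_uIcc t₀ t).norm_image_sub_le_of_norm_hasDerivWithin_le
    (f := fun s => f s x - f s x₀ - s * ((x - x₀) * L))
    (fun s hs => (((h₁ s hs x right_mem_uIcc).sub (h₁ s hs x₀ left_mem_uIcc)).sub
      (hasDerivAt_mul_const _)).hasDerivWithinAt)
    hslice left_mem_uIcc right_mem_uIcc using 1
  congr 1; ring

theorem uIcc_subset_ball {t₀ t δ : ℝ} (ht : dist t t₀ < δ) : [[t₀, t]] ⊆ Metric.ball t₀ δ :=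
  fun _ hs => (Real.dist_le_of_mem_uIcc hs left_mem_uIcc).trans_lt (by rwa [dist_comm])

theorem hasDerivAt_of_mixed_partials {f f₁ f₂ f₁₂ : ℝ → ℝ → ℝ} {U : Set (ℝ × ℝ)} (hU : IsOpen U)
    (h₁ : ∀ p ∈ U, HasDerivAt (f · p.2) (f₁ p.1 p.2) p.1)
    (h₂ : ∀ p ∈ U, HasDerivAt (f p.1) (f₂ p.1 p.2) p.2)
    (h₁₂ : ∀ p ∈ U, HasDerivAt (f₁ p.1) (f₁₂ p.1 p.2) p.2)
    (hc : ContinuousOn (uncurry f₁₂) U) :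
    ∀ p ∈ U, HasDerivAt (f₂ · p.2) (f₁₂ p.1 p.2) p.1 := by
  rintro ⟨t₀, x₀⟩ hp
  rw [hasDerivAt_iff_isLittleO, Asymptotics.isLittleO_iff]
  intro c hc₀
  have hnear : ∀ᶠ q in 𝓝 (t₀, x₀), q ∈ U ∧ ‖f₁₂ q.1 q.2 - f₁₂ t₀ x₀‖ ≤ c := by
    filter_upwards [hU.mem_nhds hp, (hc.continuousAt (hU.mem_nhds hp)).eventually
      (Metric.closedBall_mem_nhds _ hc₀)] with q hqU hq
    exact ⟨hqU, by rwa [dist_eq_norm] at hq⟩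
  obtain ⟨δ, hδ, hball⟩ := Metric.mem_nhds_iff.1 hnear
  have hrect : ∀ t, dist t t₀ < δ → ∀ x, dist x x₀ < δ → ∀ s ∈ [[t₀, t]], ∀ y ∈ [[x₀, x]],
      (s, y) ∈ U ∧ ‖f₁₂ s y - f₁₂ t₀ x₀‖ ≤ c := fun t ht x hx s hs y hy =>
    hball (ball_prod_same t₀ x₀ δ ▸ ⟨uIcc_subset_ball ht hs, uIcc_subset_ball hx hy⟩)
  filter_upwards [Metric.ball_mem_nhds t₀ hδ] with t ht
  have hU₀ : ∀ s, dist s t₀ < δ → (s, x₀) ∈ U := fun s hs =>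
    (hrect s hs x₀ (Metric.mem_ball_self hδ) s right_mem_uIcc x₀ left_mem_uIcc).1
  have hderiv : HasDerivAt (fun x => f t x - f t₀ x - x * ((t - t₀) * f₁₂ t₀ x₀))
      (f₂ t x₀ - f₂ t₀ x₀ - (t - t₀) * f₁₂ t₀ x₀) x₀ :=
    ((h₂ (t, x₀) (hU₀ t ht)).sub (h₂ (t₀, x₀) hp)).sub (hasDerivAt_mul_const _)
  -- By the rectangle estimate this function is `c ‖t - t₀‖`-Lipschitz at `x₀`, which bounds its
  -- derivative there.
  have hlip : ∀ᶠ x in 𝓝 x₀, ‖(f t x - f t₀ x - x * ((t - t₀) * f₁₂ t₀ x₀))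
      - (f t x₀ - f t₀ x₀ - x₀ * ((t - t₀) * f₁₂ t₀ x₀))‖ ≤ c * ‖t - t₀‖ * ‖x - x₀‖ := by
    filter_upwards [Metric.ball_mem_nhds x₀ hδ] with x hx
    have hR := hrect t ht x hx
    convert norm_rectangle_sub_le (fun s hs y hy => h₁ (s, y) (hR s hs y hy).1)
      (fun s hs y hy => h₁₂ (s, y) (hR s hs y hy).1) (fun s hs y hy => (hR s hs y hy).2)
      using 1
    · congr 1; ring
    · ring
  simpa [smul_eq_mul] using hderiv.le_of_lip' (by positivity) hlip

section Rectangle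

variable {f f₁ f₂ : ℝ → ℝ → ℝ} {a b c d : ℝ}

theorem forall_mem_Ioo_prod_hasDerivAt_fst
    (h : ∀ s ∈ Icc c d, ∀ x ∈ Icc a b, HasDerivWithinAt (f · x) (f₁ s x) (Icc c d) s) :
    ∀ p ∈ Ioo c d ×ˢ Ioo a b, HasDerivAt (f · p.2) (f₁ p.1 p.2) p.1 := fun p hp =>
  (h p.1 (Ioo_subset_Icc_self hp.1) p.2 (Ioo_subset_Icc_self hp.2)).hasDerivAt
    (Icc_mem_nhds hp.1.1 hp.1.2)

theorem forall_mem_Ioo_prod_hasDerivAt_snd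
    (h : ∀ s ∈ Icc c d, ∀ x ∈ Icc a b, HasDerivWithinAt (f s) (f₂ s x) (Icc a b) x) :
    ∀ p ∈ Ioo c d ×ˢ Ioo a b, HasDerivAt (f p.1) (f₂ p.1 p.2) p.2 := fun p hp =>
  (h p.1 (Ioo_subset_Icc_self hp.1) p.2 (Ioo_subset_Icc_self hp.2)).hasDerivAt
    (Icc_mem_nhds hp.2.1 hp.2.2)

theorem hasDerivAt_of_mixed_partials_twice {f₂₂ f₁₂ f₁₂₂ : ℝ → ℝ → ℝ}
    (h₁ : ∀ s ∈ Icc c d, ∀ x ∈ Icc a b, HasDerivWithinAt (f · x) (f₁ s x) (Icc c d) s)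
    (h₂ : ∀ s ∈ Icc c d, ∀ x ∈ Icc a b, HasDerivWithinAt (f s) (f₂ s x) (Icc a b) x)
    (h₂₂ : ∀ s ∈ Icc c d, ∀ x ∈ Icc a b, HasDerivWithinAt (f₂ s) (f₂₂ s x) (Icc a b) x)
    (h₁₂ : ∀ s ∈ Icc c d, ∀ x ∈ Icc a b, HasDerivWithinAt (f₁ s) (f₁₂ s x) (Icc a b) x)
    (h₁₂₂ : ∀ s ∈ Icc c d, ∀ x ∈ Icc a b, HasDerivWithinAt (f₁₂ s) (f₁₂₂ s x) (Icc a b) x)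
    (hc₁₂ : ContinuousOn (uncurry f₁₂) (Icc c d ×ˢ Icc a b))
    (hc₁₂₂ : ContinuousOn (uncurry f₁₂₂) (Icc c d ×ˢ Icc a b)) :
    ∀ p ∈ Ioo c d ×ˢ Ioo a b, HasDerivAt (f₂₂ · p.2) (f₁₂₂ p.1 p.2) p.1 := by
  have hU : IsOpen (Ioo c d ×ˢ Ioo a b) := isOpen_Ioo.prod isOpen_Ioo
  have hsub : Ioo c d ×ˢ Ioo a b ⊆ Icc c d ×ˢ Icc a b :=
    prod_mono Ioo_subset_Icc_self Ioo_subset_Icc_self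
  have h₁' := hasDerivAt_of_mixed_partials hU (forall_mem_Ioo_prod_hasDerivAt_fst h₁)
    (forall_mem_Ioo_prod_hasDerivAt_snd h₂) (forall_mem_Ioo_prod_hasDerivAt_snd h₁₂)
    (hc₁₂.mono hsub)
  exact hasDerivAt_of_mixed_partials hU h₁' (forall_mem_Ioo_prod_hasDerivAt_snd h₂₂)
    (forall_mem_Ioo_prod_hasDerivAt_snd h₁₂₂) (hc₁₂₂.mono hsub)

theorem hasDerivAt_of_mixed_partials_swap {f₂₁ : ℝ → ℝ → ℝ}
    (h₁ : ∀ s ∈ Icc c d, ∀ x ∈ Icc a b, HasDerivWithinAt (f · x) (f₁ s x) (Icc c d) s)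
    (h₂ : ∀ s ∈ Icc c d, ∀ x ∈ Icc a b, HasDerivWithinAt (f s) (f₂ s x) (Icc a b) x)
    (h₂₁ : ∀ s ∈ Icc c d, ∀ x ∈ Icc a b, HasDerivWithinAt (f₂ · x) (f₂₁ s x) (Icc c d) s)
    (hc : ContinuousOn (uncurry f₂₁) (Icc c d ×ˢ Icc a b)) {s : ℝ} (hs : s ∈ Ioo c d) :
    ∀ x ∈ Ioo a b, HasDerivAt (f₁ s) (f₂₁ s x) x := fun x hx =>
  hasDerivAt_of_mixed_partials (f := fun x s => f s x) (f₁ := fun x s => f₂ s x)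
    (f₂ := fun x s => f₁ s x) (f₁₂ := fun x s => f₂₁ s x)
    (isOpen_Ioo.prod isOpen_Ioo)
    (fun p hp => forall_mem_Ioo_prod_hasDerivAt_snd h₂ (p.2, p.1) ⟨hp.2, hp.1⟩)
    (fun p hp => forall_mem_Ioo_prod_hasDerivAt_fst h₁ (p.2, p.1) ⟨hp.2, hp.1⟩)
    (fun p hp => forall_mem_Ioo_prod_hasDerivAt_fst h₂₁ (p.2, p.1) ⟨hp.2, hp.1⟩)
    ((hc.mono (prod_mono Ioo_subset_Icc_self Ioo_subset_Icc_self)).comp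
      continuous_swap.continuousOn
      fun _ hp => ⟨hp.2, hp.1⟩) (x, s) ⟨hx, hs⟩

end Rectangle

theorem ae_mem_Ioo_of_mem_uIoc {a b : ℝ} (hab : a ≤ b) : ∀ᵐ x, x ∈ Ι a b → x ∈ Ioo a b := by
  filter_upwards [(Ioo_ae_eq_Ioc (μ := volume) (a := a) (b := b)).mem_iff] with x hx
  rw [uIoc_of_le hab, ← hx]
  exact id

theorem hasDerivAt_intervalIntegral_of_continuousOn {F F' : ℝ → ℝ → ℝ} {a b c d t : ℝ}
    (hab : a ≤ b) (ht : t ∈ Ioo c d)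
    (hF : ∀ s ∈ Ioo c d, ContinuousOn (F s) (Icc a b))
    (hF' : ContinuousOn (uncurry F') (Icc c d ×ˢ Icc a b))
    (hderiv : ∀ s ∈ Ioo c d, ∀ x ∈ Ioo a b, HasDerivAt (F · x) (F' s x) s) :
    HasDerivAt (fun s => ∫ x in a..b, F s x) (∫ x in a..b, F' t x) t := by
  obtain ⟨C, hC⟩ := (isCompact_Icc.prod isCompact_Icc).exists_bound_of_continuousOn hF'
  have hIoc : Ι a b ⊆ Icc a b := uIoc_of_le hab ▸ Ioc_subset_Icc_self
  refine (intervalIntegral.hasDerivAt_integral_of_dominated_loc_of_deriv_le (bound := fun _ => C)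
    (Ioo_mem_nhds ht.1 ht.2) ?_ ((hF t ht).intervalIntegrable_of_Icc hab) ?_ ?_
    intervalIntegrable_const ?_).2
  · filter_upwards [Ioo_mem_nhds ht.1 ht.2] with s hs
    exact ((hF s hs).mono hIoc).aestronglyMeasurable measurableSet_uIoc
  · exact ((hF'.uncurry_left t (Ioo_subset_Icc_self ht)).mono hIoc).aestronglyMeasurable
      measurableSet_uIoc
  · exact ae_of_all _ fun x hx s hs => hC (s, x) ⟨Ioo_subset_Icc_self hs, hIoc hx⟩
  · filter_upwards [ae_mem_Ioo_of_mem_uIoc hab] with x hx hxI s hs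
    exact hderiv s hs x (hx hxI)

theorem hasDerivAt_integral_sq {g g' : ℝ → ℝ → ℝ} {a b c d t : ℝ} (hab : a ≤ b)
    (ht : t ∈ Ioo c d) (hg : ContinuousOn (uncurry g) (Icc c d ×ˢ Icc a b))
    (hg' : ContinuousOn (uncurry g') (Icc c d ×ˢ Icc a b))
    (hderiv : ∀ s ∈ Ioo c d, ∀ x ∈ Ioo a b, HasDerivAt (g · x) (g' s x) s) :
    HasDerivAt (fun s => ∫ x in a..b, g s x ^ 2) (∫ x in a..b, 2 * g t x * g' t x) t :=
  hasDerivAt_intervalIntegral_of_continuousOn (F' := fun s x => 2 * g s x * g' s x) hab ht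
    (fun s hs => (hg.uncurry_left s (Ioo_subset_Icc_self hs)).pow 2)
    ((continuousOn_const.mul hg).mul hg')
    fun s hs x hx => ((hderiv s hs x hx).fun_pow 2).congr_deriv (by ring)

theorem hasDerivAt_integral_sq_div {g g' h h' : ℝ → ℝ → ℝ} {a b c d t : ℝ} (hab : a ≤ b)
    (ht : t ∈ Ioo c d)
    (hgt : ∀ s ∈ Icc c d, ∀ x ∈ Icc a b, HasDerivWithinAt (g · x) (g' s x) (Icc c d) s)
    (hht : ∀ s ∈ Icc c d, ∀ x ∈ Icc a b, HasDerivWithinAt (h · x) (h' s x) (Icc c d) s)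
    (hg : ContinuousOn (uncurry g) (Icc c d ×ˢ Icc a b))
    (hg' : ContinuousOn (uncurry g') (Icc c d ×ˢ Icc a b))
    (hh : ContinuousOn (uncurry h) (Icc c d ×ˢ Icc a b))
    (hh' : ContinuousOn (uncurry h') (Icc c d ×ˢ Icc a b))
    (hne : ∀ s ∈ Icc c d, ∀ x ∈ Icc a b, h s x ≠ 0) :
    HasDerivAt (fun s => ∫ x in a..b, g s x ^ 2 / h s x)
      (∫ x in a..b, (2 * g t x * g' t x * h t x - g t x ^ 2 * h' t x) / h t x ^ 2) t :=
  hasDerivAt_intervalIntegral_of_continuousOn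
    (F' := fun s x => (2 * g s x * g' s x * h s x - g s x ^ 2 * h' s x) / h s x ^ 2) hab ht
    (fun s hs => ((hg.uncurry_left s (Ioo_subset_Icc_self hs)).pow 2).div
      (hh.uncurry_left s (Ioo_subset_Icc_self hs)) (hne s (Ioo_subset_Icc_self hs)))
    (((((continuousOn_const.mul hg).mul hg').mul hh).sub ((hg.pow 2).mul hh')).div (hh.pow 2)
      fun p hp => pow_ne_zero 2 (hne p.1 hp.1 p.2 hp.2))
    fun s hs x hx =>
      have hs' := Ioo_subset_Icc_self hs
      have hx' := Ioo_subset_Icc_self hx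
      (((hgt s hs' x hx').hasDerivAt (Icc_mem_nhds hs.1 hs.2)).fun_pow 2 |>.div
        ((hht s hs' x hx').hasDerivAt (Icc_mem_nhds hs.1 hs.2)) (hne s hs' x hx')).congr_deriv
        (by ring)

theorem hasDerivAt_of_slope_eq_integral {I : ℝ → ℝ} {g : ℝ → ℝ → ℝ} {φ : ℝ → ℝ}
    {t a b C : ℝ}
    (hslope : ∀ᶠ s in 𝓝[≠] t, slope I t s = ∫ x in a..b, g s x)
    (hmeas : ∀ᶠ s in 𝓝[≠] t, AEStronglyMeasurable (g s) (volume.restrict (Ι a b)))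
    (hbound : ∀ᶠ s in 𝓝[≠] t, ∀ x ∈ Ι a b, ‖g s x‖ ≤ C)
    (hlim : ∀ x ∈ Ι a b, Tendsto (fun s => g s x) (𝓝[≠] t) (𝓝 (φ x))) :
    HasDerivAt I (∫ x in a..b, φ x) t := by
  rw [hasDerivAt_iff_tendsto_slope]
  refine (intervalIntegral.tendsto_integral_filter_of_dominated_convergence (fun _ => C) hmeas
    (hbound.mono fun s hs => ae_of_all _ (hs ·)) intervalIntegrable_const
    (ae_of_all _ hlim)).congr' ?_
  exact hslope.mono fun s hs => hs.symm

section Dirichlet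

variable {p q v w : ℝ → ℝ → ℝ} {a b c d : ℝ}

theorem integral_sq_sub_integral_sq_of_boundary_eq_zero (hab : a ≤ b)
    (hpx : ∀ s ∈ Icc c d, ∀ x ∈ Icc a b, HasDerivWithinAt (p s) (v s x) (Icc a b) x)
    (hvx : ∀ s ∈ Icc c d, ∀ x ∈ Icc a b, HasDerivWithinAt (v s) (w s x) (Icc a b) x)
    (hw : ContinuousOn (uncurry w) (Icc c d ×ˢ Icc a b))
    (hbd : ∀ s ∈ Icc c d, p s a = 0 ∧ p s b = 0) {s r : ℝ} (hs : s ∈ Icc c d) (hr : r ∈ Icc c d) :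
    (∫ x in a..b, v s x ^ 2) - ∫ x in a..b, v r x ^ 2
      = -∫ x in a..b, (p s x - p r x) * (w s x + w r x) := by
  have hv : ∀ τ ∈ Icc c d, ContinuousOn (v τ) (Icc a b) := fun τ hτ x hx =>
    (hvx τ hτ x hx).continuousWithinAt
  have hparts := intervalIntegral.integral_mul_deriv_eq_deriv_mul_of_hasDerivWithinAt
    (u := fun x => p s x - p r x) (v := fun x => v s x + v r x)
    (u' := fun x => v s x - v r x) (v' := fun x => w s x + w r x)
    (by rw [uIcc_of_le hab]; exact fun x hx => (hpx s hs x hx).sub (hpx r hr x hx))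
    (by rw [uIcc_of_le hab]; exact fun x hx => (hvx s hs x hx).add (hvx r hr x hx))
    (((hv s hs).sub (hv r hr)).intervalIntegrable_of_Icc hab)
    (((hw.uncurry_left s hs).add (hw.uncurry_left r hr)).intervalIntegrable_of_Icc hab)
  have hsq : ∀ τ ∈ Icc c d, IntervalIntegrable (fun x => v τ x ^ 2) volume a b := fun τ hτ =>
    ((hv τ hτ).pow 2).intervalIntegrable_of_Icc hab
  rw [hparts, (hbd s hs).1, (hbd s hs).2, (hbd r hr).1, (hbd r hr).2,
    ← intervalIntegral.integral_sub (hsq s hs) (hsq r hr)]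
  simp only [sub_self, zero_mul, zero_sub, neg_neg]
  exact intervalIntegral.integral_congr fun x _ => by ring

theorem hasDerivAt_integral_sq_of_boundary_eq_zero {t : ℝ} (hab : a ≤ b) (ht : t ∈ Ioo c d)
    (hpt : ∀ s ∈ Icc c d, ∀ x ∈ Icc a b, HasDerivWithinAt (p · x) (q s x) (Icc c d) s)
    (hpx : ∀ s ∈ Icc c d, ∀ x ∈ Icc a b, HasDerivWithinAt (p s) (v s x) (Icc a b) x)
    (hvx : ∀ s ∈ Icc c d, ∀ x ∈ Icc a b, HasDerivWithinAt (v s) (w s x) (Icc a b) x)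
    (hq : ContinuousOn (uncurry q) (Icc c d ×ˢ Icc a b))
    (hw : ContinuousOn (uncurry w) (Icc c d ×ˢ Icc a b))
    (hbd : ∀ s ∈ Icc c d, p s a = 0 ∧ p s b = 0) :
    HasDerivAt (fun s => ∫ x in a..b, v s x ^ 2) (∫ x in a..b, -(2 * q t x * w t x)) t := by
  have htI := Ioo_subset_Icc_self ht
  have hK : IsCompact (Icc c d ×ˢ Icc a b) := isCompact_Icc.prod isCompact_Icc
  obtain ⟨Cq, hCq⟩ := hK.exists_bound_of_continuousOn hq
  obtain ⟨Cw, hCw⟩ := hK.exists_bound_of_continuousOn hw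
  have hIoc : Ι a b ⊆ Icc a b := uIoc_of_le hab ▸ Ioc_subset_Icc_self
  have hnear : ∀ᶠ s in 𝓝[≠] t, s ≠ t ∧ s ∈ Icc c d :=
    inter_mem self_mem_nhdsWithin (mem_nhdsWithin_of_mem_nhds (Icc_mem_nhds ht.1 ht.2))
  refine hasDerivAt_of_slope_eq_integral (C := Cq * (Cw + Cw))
    (g := fun s x => -(slope (p · x) t s * (w s x + w t x))) ?_ ?_ ?_ ?_
  · filter_upwards [hnear] with s ⟨_, hs⟩
    simp only [slope_def_field]
    rw [integral_sq_sub_integral_sq_of_boundary_eq_zero hab hpx hvx hw hbd hs htI,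
      ← intervalIntegral.integral_neg, ← intervalIntegral.integral_div]
    exact intervalIntegral.integral_congr fun x _ => by ring
  · filter_upwards [hnear] with s ⟨_, hs⟩
    have hp : ∀ τ ∈ Icc c d, ContinuousOn (p τ) (Icc a b) := fun τ hτ x hx =>
      (hpx τ hτ x hx).continuousWithinAt
    simp only [slope_def_field]
    exact (((((hp s hs).sub (hp t htI)).div_const _).mul
      ((hw.uncurry_left s hs).add (hw.uncurry_left t htI))).neg.mono hIoc).aestronglyMeasurable
      measurableSet_uIoc
  · filter_upwards [hnear] with s ⟨hst, hs⟩ x hx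
    rw [norm_neg, norm_mul]
    refine mul_le_mul ?_ ((norm_add_le _ _).trans (add_le_add (hCw (s, x) ⟨hs, hIoc hx⟩)
      (hCw (t, x) ⟨htI, hIoc hx⟩))) (norm_nonneg _)
      ((norm_nonneg _).trans (hCq (t, x) ⟨htI, hIoc hx⟩))
    rw [slope_def_field, norm_div, div_le_iff₀ (norm_pos_iff.2 (sub_ne_zero.2 hst))]
    exact (convex_Icc c d).norm_image_sub_le_of_norm_hasDerivWithin_le
      (fun r hr => hpt r hr x (hIoc hx)) (fun r hr => hCq (r, x) ⟨hr, hIoc hx⟩) htI hs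
  · intro x hx
    have hw_t : Tendsto (w · x) (𝓝 t) (𝓝 (w t x)) :=
      (hw.uncurry_right x (hIoc hx)).continuousAt (Icc_mem_nhds ht.1 ht.2)
    convert ((hasDerivAt_iff_tendsto_slope.1 ((hpt t htI x (hIoc hx)).hasDerivAt
      (Icc_mem_nhds ht.1 ht.2))).mul ((hw_t.mono_left nhdsWithin_le_nhds).add_const (w t x))).neg
      using 2
    ring

end Dirichlet

theorem eq_zero_of_hasDerivWithinAt_of_eqOn_zero {f : ℝ → ℝ} {f' c d s : ℝ} (hcd : c < d)
    (hs : s ∈ Icc c d) (hf : HasDerivWithinAt f f' (Icc c d) s) (h0 : EqOn f 0 (Icc c d)) :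
    f' = 0 :=
  (uniqueDiffOn_Icc hcd s hs).eq_deriv _ hf ((hasDerivWithinAt_const s _ 0).congr h0 (h0 hs))

theorem derivWithin_derivWithin_log {f f' f'' : ℝ → ℝ} {s : Set ℝ} (hs : UniqueDiffOn ℝ s)
    (hf : ∀ x ∈ s, HasDerivWithinAt f (f' x) s x) (hf' : ∀ x ∈ s, HasDerivWithinAt f' (f'' x) s x)
    (hne : ∀ x ∈ s, f x ≠ 0) {x : ℝ} (hx : x ∈ s) :
    derivWithin (derivWithin (fun y => Real.log (f y)) s) s x
      = f'' x / f x - f' x ^ 2 / f x ^ 2 := by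
  have hlog : EqOn (derivWithin (fun y => Real.log (f y)) s) (fun y => f' y / f y) s :=
    fun y hy => ((hf y hy).log (hne y hy)).derivWithin (hs y hy)
  have hquot : HasDerivWithinAt (fun y => f' y / f y) ((f'' x * f x - f' x * f' x) / f x ^ 2) s x :=
    (hf' x hx).div (hf x hx) (hne x hx)
  rw [derivWithin_congr hlog (hlog hx), hquot.derivWithin (hs x hx)]
  field_simp [hne x hx]

theorem integral_fisher_energy_identity {θ θx θxx θt θtx utt uxx utx utxx : ℝ → ℝ} {a b μ : ℝ}
    (hab : a ≤ b) (hne : ∀ x ∈ Icc a b, θ x ≠ 0)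
    (hθx : ∀ x ∈ Icc a b, HasDerivWithinAt θ (θx x) (Icc a b) x)
    (hθxx : ∀ x ∈ Icc a b, HasDerivWithinAt θx (θxx x) (Icc a b) x)
    (hθtx : ∀ x ∈ Ioo a b, HasDerivAt θt (θtx x) x)
    (hutxx : ∀ x ∈ Icc a b, HasDerivWithinAt utx (utxx x) (Icc a b) x)
    (hθt_cont : ContinuousOn θt (Icc a b)) (hθtx_cont : ContinuousOn θtx (Icc a b))
    (hθxx_cont : ContinuousOn θxx (Icc a b)) (hutt_cont : ContinuousOn utt (Icc a b))
    (huxx_cont : ContinuousOn uxx (Icc a b)) (hutxx_cont : ContinuousOn utxx (Icc a b))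
    (hwave : ∀ x ∈ Ioo a b, utt x - uxx x = μ * θx x)
    (hheat : ∀ x ∈ Ioo a b, θt x - θxx x = μ * θ x * utx x)
    (hθx_a : θx a = 0) (hθx_b : θx b = 0) :
    (∫ x in a..b, (2 * θx x * θtx x * θ x - θx x ^ 2 * θt x) / θ x ^ 2)
      + (∫ x in a..b, -(2 * utt x * utxx x)) + (∫ x in a..b, 2 * uxx x * utxx x)
      = 2 * (-(∫ x in a..b, θ x * (θxx x / θ x - θx x ^ 2 / θ x ^ 2) ^ 2)
          + μ / 2 * ∫ x in a..b, θx x ^ 2 / θ x * utx x) := by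
  have hθ_cont : ContinuousOn θ (Icc a b) := fun x hx => (hθx x hx).continuousWithinAt
  have hθx_cont : ContinuousOn θx (Icc a b) := fun x hx => (hθxx x hx).continuousWithinAt
  have hutx_cont : ContinuousOn utx (Icc a b) := fun x hx => (hutxx x hx).continuousWithinAt
  have hne2 : ∀ x ∈ Icc a b, θ x ^ 2 ≠ 0 := fun x hx => pow_ne_zero 2 (hne x hx)
  have iA : IntervalIntegrable (fun x => (2 * θx x * θtx x * θ x - θx x ^ 2 * θt x) / θ x ^ 2)
      volume a b := ContinuousOn.intervalIntegrable_of_Icc hab <|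
    ((((continuousOn_const.mul hθx_cont).mul hθtx_cont).mul hθ_cont).sub
      ((hθx_cont.pow 2).mul hθt_cont)).div (hθ_cont.pow 2) hne2
  have iB : IntervalIntegrable (fun x => -(2 * utt x * utxx x)) volume a b :=
    ((continuousOn_const.mul hutt_cont).mul hutxx_cont).neg.intervalIntegrable_of_Icc hab
  have iC : IntervalIntegrable (fun x => 2 * uxx x * utxx x) volume a b :=
    ((continuousOn_const.mul huxx_cont).mul hutxx_cont).intervalIntegrable_of_Icc hab
  have iD : IntervalIntegrable (fun x => θ x * (θxx x / θ x - θx x ^ 2 / θ x ^ 2) ^ 2)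
      volume a b := ContinuousOn.intervalIntegrable_of_Icc hab <|
    hθ_cont.mul
      (((hθxx_cont.div hθ_cont hne).sub ((hθx_cont.pow 2).div (hθ_cont.pow 2) hne2)).pow 2)
  have iE : IntervalIntegrable (fun x => θx x ^ 2 / θ x * utx x) volume a b :=
    (((hθx_cont.pow 2).div hθ_cont hne).mul hutx_cont).intervalIntegrable_of_Icc hab
  have hΦ : ∫ x in a..b, ((2 * θx x * θtx x * θ x - θx x ^ 2 * θt x) / θ x ^ 2
      + -(2 * utt x * utxx x) + 2 * uxx x * utxx x
      + 2 * (θ x * (θxx x / θ x - θx x ^ 2 / θ x ^ 2) ^ 2) - μ * (θx x ^ 2 / θ x * utx x)) = 0 := by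
    rw [intervalIntegral.integral_eq_sub_of_hasDerivAt_of_le hab
      (f := fun x => 2 * θt x * θx x / θ x - θx x ^ 3 / θ x ^ 2 - 2 * μ * θx x * utx x)
      ((((continuousOn_const.mul hθt_cont).mul hθx_cont).div hθ_cont hne).sub
        ((hθx_cont.pow 3).div (hθ_cont.pow 2) hne2) |>.sub
        ((continuousOn_const.mul hθx_cont).mul hutx_cont))
      (fun x hx => ?_) ((((iA.add iB).add iC).add (iD.const_mul 2)).sub (iE.const_mul μ))]
    · simp [hθx_a, hθx_b]
    have hx' := Ioo_subset_Icc_self hx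
    have hθ' := (hθx x hx').hasDerivAt (Icc_mem_nhds hx.1 hx.2)
    have hθx' := (hθxx x hx').hasDerivAt (Icc_mem_nhds hx.1 hx.2)
    have hutx' := (hutxx x hx').hasDerivAt (Icc_mem_nhds hx.1 hx.2)
    refine (((((hθtx x hx).const_mul 2).mul hθx').div hθ' (hne x hx')).sub
      ((hθx'.fun_pow 3).div (hθ'.fun_pow 2) (hne2 x hx')) |>.sub
      ((hθx'.const_mul (2 * μ)).mul hutx')).congr_deriv ?_
    have hθ0 := hne x hx'
    have hθt : θt x = θxx x + μ * θ x * utx x := by linarith [hheat x hx]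
    have hutt : utt x = uxx x + μ * θx x := by linarith [hwave x hx]
    simp only [Pi.mul_apply, hθt, hutt, Nat.cast_ofNat, Nat.reduceSub]
    field_simp
    ring
  rw [intervalIntegral.integral_sub (((iA.add iB).add iC).add (iD.const_mul 2)) (iE.const_mul μ),
    intervalIntegral.integral_add ((iA.add iB).add iC) (iD.const_mul 2),
    intervalIntegral.integral_add (iA.add iB) iC, intervalIntegral.integral_add iA iB,
    intervalIntegral.integral_const_mul, intervalIntegral.integral_const_mul] at hΦ
  linear_combination hΦ

theorem stmt_6 (a b T μ : ℝ) (hab : a < b) (hT : 0 < T)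
    (u ut utt ux uxx utx utxx θ θt θx θxx θtx : ℝ → ℝ → ℝ)
    (hut : ∀ t ∈ Icc 0 T, ∀ x ∈ Icc a b,
      HasDerivWithinAt (fun s => u s x) (ut t x) (Icc 0 T) t)
    (hutt : ∀ t ∈ Icc 0 T, ∀ x ∈ Icc a b,
      HasDerivWithinAt (fun s => ut s x) (utt t x) (Icc 0 T) t)
    (hux : ∀ t ∈ Icc 0 T, ∀ x ∈ Icc a b,
      HasDerivWithinAt (u t) (ux t x) (Icc a b) x)
    (huxx : ∀ t ∈ Icc 0 T, ∀ x ∈ Icc a b,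
      HasDerivWithinAt (ux t) (uxx t x) (Icc a b) x)
    (hutx : ∀ t ∈ Icc 0 T, ∀ x ∈ Icc a b,
      HasDerivWithinAt (ut t) (utx t x) (Icc a b) x)
    (hutxx : ∀ t ∈ Icc 0 T, ∀ x ∈ Icc a b,
      HasDerivWithinAt (utx t) (utxx t x) (Icc a b) x)
    (hθt : ∀ t ∈ Icc 0 T, ∀ x ∈ Icc a b,
      HasDerivWithinAt (fun s => θ s x) (θt t x) (Icc 0 T) t)
    (hθx : ∀ t ∈ Icc 0 T, ∀ x ∈ Icc a b,
      HasDerivWithinAt (θ t) (θx t x) (Icc a b) x)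
    (hθxx : ∀ t ∈ Icc 0 T, ∀ x ∈ Icc a b,
      HasDerivWithinAt (θx t) (θxx t x) (Icc a b) x)
    (hθtx : ∀ t ∈ Icc 0 T, ∀ x ∈ Icc a b,
      HasDerivWithinAt (fun s => θx s x) (θtx t x) (Icc 0 T) t)
    (hcont : ContinuousOn (fun p : ℝ × ℝ =>
      (utt p.1 p.2, uxx p.1 p.2, utx p.1 p.2, utxx p.1 p.2, θt p.1 p.2, θxx p.1 p.2,
        θtx p.1 p.2, θx p.1 p.2, θ p.1 p.2)) (Icc 0 T ×ˢ Icc a b))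
    (hpos : ∀ t ∈ Icc 0 T, ∀ x ∈ Icc a b, 0 < θ t x)
    (hwave : ∀ t ∈ Ioo 0 T, ∀ x ∈ Ioo a b, utt t x - uxx t x = μ * θx t x)
    (hheat : ∀ t ∈ Ioo 0 T, ∀ x ∈ Ioo a b, θt t x - θxx t x = μ * θ t x * utx t x)
    (hbd : ∀ t ∈ Icc 0 T, u t a = 0 ∧ u t b = 0 ∧ θx t a = 0 ∧ θx t b = 0) :
    ∀ t ∈ Ioo 0 T,
      HasDerivAt (fun s =>
          (∫ x in a..b, (θx s x) ^ 2 / θ s x) + (∫ x in a..b, (utx s x) ^ 2)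
            + (∫ x in a..b, (uxx s x) ^ 2))
        (2 * (-(∫ x in a..b,
            θ t x * (derivWithin (derivWithin (fun y => Real.log (θ t y)) (Icc a b)) (Icc a b) x) ^ 2)
          + μ / 2 * ∫ x in a..b, (θx t x) ^ 2 / θ t x * utx t x)) t := by
  intro t ht
  have htI := Ioo_subset_Icc_self ht
  have hne : ∀ s ∈ Icc 0 T, ∀ x ∈ Icc a b, θ s x ≠ 0 := fun s hs x hx => (hpos s hs x hx).ne'
  set K := Icc 0 T ×ˢ Icc a b
  obtain ⟨c_utt, c_uxx, c_utx, c_utxx, c_θt, c_θxx, c_θtx, c_θx, c_θ⟩ :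
      ContinuousOn (uncurry utt) K ∧ ContinuousOn (uncurry uxx) K ∧ ContinuousOn (uncurry utx) K ∧
      ContinuousOn (uncurry utxx) K ∧ ContinuousOn (uncurry θt) K ∧ ContinuousOn (uncurry θxx) K ∧
      ContinuousOn (uncurry θtx) K ∧ ContinuousOn (uncurry θx) K ∧ ContinuousOn (uncurry θ) K :=
    ⟨hcont.fst, hcont.snd.fst, hcont.snd.snd.fst, hcont.snd.snd.snd.fst,
      hcont.snd.snd.snd.snd.fst, hcont.snd.snd.snd.snd.snd.fst, hcont.snd.snd.snd.snd.snd.snd.fst,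
      hcont.snd.snd.snd.snd.snd.snd.snd.fst, hcont.snd.snd.snd.snd.snd.snd.snd.snd⟩
  have hut_bd : ∀ s ∈ Icc 0 T, ut s a = 0 ∧ ut s b = 0 := fun s hs =>
    ⟨eq_zero_of_hasDerivWithinAt_of_eqOn_zero hT hs (hut s hs a (left_mem_Icc.2 hab.le))
        fun r hr => (hbd r hr).1,
      eq_zero_of_hasDerivWithinAt_of_eqOn_zero hT hs (hut s hs b (right_mem_Icc.2 hab.le))
        fun r hr => (hbd r hr).2.1⟩
  have hF := hasDerivAt_integral_sq_div hab.le ht hθtx hθt c_θx c_θtx c_θ c_θt hne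
  have hG := hasDerivAt_integral_sq_of_boundary_eq_zero hab.le ht hutt hutx hutxx c_utt c_utxx
    hut_bd
  have hH := hasDerivAt_integral_sq hab.le ht c_uxx c_utxx fun s hs x hx =>
    hasDerivAt_of_mixed_partials_twice hut hux huxx hutx hutxx c_utx c_utxx (s, x) ⟨hs, hx⟩
  rw [intervalIntegral.integral_congr fun x hx => by
      rw [derivWithin_derivWithin_log (uniqueDiffOn_Icc hab) (hθx t htI) (hθxx t htI) (hne t htI)
        (uIcc_of_le hab.le ▸ hx)],
    ← integral_fisher_energy_identity hab.le (hne t htI) (hθx t htI) (hθxx t htI)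
      (hasDerivAt_of_mixed_partials_swap hθt hθx hθtx c_θtx ht) (hutxx t htI)
      (c_θt.uncurry_left t htI) (c_θtx.uncurry_left t htI) (c_θxx.uncurry_left t htI)
      (c_utt.uncurry_left t htI) (c_uxx.uncurry_left t htI) (c_utxx.uncurry_left t htI)
      (hwave t ht) (hheat t ht) (hbd t htI).2.2.1 (hbd t htI).2.2.2]
  exact (hF.add hG).add hH
end

section
/- Let $a<b$, $\theta\in C^2([a,b])$ positive with $\theta'(a)=\theta'(b)=0$, $w\in C^1([a,b])$, $\mu\in\mathbb{R}$, and $\varepsilon>0$. Then $\frac{\mu}{2}\int_a^b\frac{(\theta')^2}{\theta}\,w'\,dx \le \varepsilon\int_a^b\theta\left[(\log\theta)''\right]^2dx + \frac{13\mu^2}{8\varepsilon}\,\|w\|_{L^\infty(a,b)}^2\int_a^b\left((\theta^{1/2})'\right)^2dx$. -/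
/-!
Write `r = √θ`. Then `θ'² / θ = 4 r'²`, `(log θ)'' = 2 (r r'' - r'²) / r²`, and `r'` vanishes at
both endpoints. Integrating `(w r'²)'` gives `∫ w' r'² = -2 ∫ w r' r''`, and Young's inequality
bounds `-4 μ w r' r''` by `4 ε r''² + μ² ‖w‖∞² r'² / ε`. Finally the pointwise identity
`θ ((log θ)'')² = 4 r''² - (8/3) (r'³ / r)' + (4/3) (r'² / r)²` integrates to
`4 ∫ r''² ≤ ∫ θ ((log θ)'')²`, so the estimate holds with the constant `1 ≤ 13/8`.
-/

open Set intervalIntegral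

theorem neg_four_mul_le_of_sq_le {μ ε v f g M : ℝ} (hε : 0 < ε) (hv : v ^ 2 ≤ M ^ 2) :
    -4 * μ * (v * (f * g)) ≤ 4 * ε * g ^ 2 + μ ^ 2 * M ^ 2 / ε * f ^ 2 := by
  have hM : 0 ≤ μ ^ 2 * f ^ 2 * (M ^ 2 - v ^ 2) := by
    have := sub_nonneg.2 hv
    positivity
  have key : 4 * ε * g ^ 2 + μ ^ 2 * M ^ 2 / ε * f ^ 2 - -4 * μ * (v * (f * g))
      = ((2 * ε * g + μ * v * f) ^ 2 + μ ^ 2 * f ^ 2 * (M ^ 2 - v ^ 2)) / ε := by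
    field_simp
    ring
  rw [← sub_nonneg, key]
  positivity

/-- With `F = r'` and `G = r''`, the right-hand side is `θ ((log θ)'')² + (8/3) (F³ / r)'`
for `θ = r²`. -/
theorem four_mul_sq_le_add_deriv_cube_div {r F G : ℝ} (hr : 0 < r) :
    4 * G ^ 2 ≤ r ^ 2 * (2 * (G * r - F ^ 2) / r ^ 2) ^ 2
      + 8 / 3 * (3 * F ^ 2 * G * r⁻¹ + F ^ 3 * (-F / r ^ 2)) := by
  have key : r ^ 2 * (2 * (G * r - F ^ 2) / r ^ 2) ^ 2
      + 8 / 3 * (3 * F ^ 2 * G * r⁻¹ + F ^ 3 * (-F / r ^ 2))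
      = 4 * G ^ 2 + 4 / 3 * (F ^ 2 / r) ^ 2 := by
    field_simp
    ring
  rw [key]
  nlinarith [sq_nonneg (F ^ 2 / r)]

theorem sq_div_eq_four_mul_sq_div_two_mul_sqrt {t d : ℝ} (ht : 0 < t) :
    d ^ 2 / t = 4 * (d / (2 * √t)) ^ 2 := by
  rw [div_pow, mul_pow, Real.sq_sqrt ht.le]
  field_simp
  ring

theorem IsCompact.abs_le_iSup_abs {α : Type*} [TopologicalSpace α] {s : Set α}
    (hs : IsCompact s) {f : α → ℝ} (hf : ContinuousOn f s) {x : α} (hx : x ∈ s) :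
    |f x| ≤ ⨆ y : s, |f y| := by
  obtain ⟨C, hC⟩ := hs.exists_bound_of_continuousOn hf
  exact le_ciSup (f := fun y : s => |f y|) ⟨C, by rintro _ ⟨y, rfl⟩; exact hC y y.2⟩ ⟨x, hx⟩

theorem exists_continuousOn_hasDerivWithinAt_div_sqrt {s : Set ℝ} {θ θ' θ'' : ℝ → ℝ}
    (hpos : ∀ x ∈ s, 0 < θ x) (hθ : ∀ x ∈ s, HasDerivWithinAt θ (θ' x) s x)
    (hθ' : ∀ x ∈ s, HasDerivWithinAt θ' (θ'' x) s x) (hθ'' : ContinuousOn θ'' s) :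
    ∃ G, ContinuousOn G s ∧
      ∀ x ∈ s, HasDerivWithinAt (fun y => θ' y / (2 * √(θ y))) (G x) s x := by
  have hθc : ContinuousOn θ s := fun x hx => (hθ x hx).continuousWithinAt
  have hθ'c : ContinuousOn θ' s := fun x hx => (hθ' x hx).continuousWithinAt
  have hr0 : ∀ x ∈ s, 2 * √(θ x) ≠ 0 := fun x hx => by
    have := hpos x hx
    positivity
  have hr0sq : ∀ x ∈ s, (2 * √(θ x)) ^ 2 ≠ 0 := fun x hx => pow_ne_zero 2 (hr0 x hx)
  refine ⟨fun x => (θ'' x * (2 * √(θ x)) - θ' x * (2 * (θ' x / (2 * √(θ x)))))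
    / (2 * √(θ x)) ^ 2, by fun_prop (disch := assumption), fun x hx => ?_⟩
  exact (hθ' x hx).fun_div (((hθ x hx).sqrt (hpos x hx).ne').const_mul 2) (hr0 x hx)

theorem eqOn_derivWithin_derivWithin_log {s : Set ℝ} (hs : UniqueDiffOn ℝ s)
    {θ r F G : ℝ → ℝ} (hθ : ∀ x ∈ s, θ x = r x ^ 2) (hr : ∀ x ∈ s, 0 < r x)
    (hF : ∀ x ∈ s, HasDerivWithinAt r (F x) s x) (hG : ∀ x ∈ s, HasDerivWithinAt F (G x) s x) :
    EqOn (derivWithin (derivWithin (fun y => Real.log (θ y)) s) s)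
      (fun x => 2 * (G x * r x - F x ^ 2) / r x ^ 2) s := by
  have hlog : EqOn (derivWithin (fun y => Real.log (θ y)) s) (fun x => 2 * F x / r x) s := by
    intro x hx
    refine HasDerivWithinAt.derivWithin ?_ (hs x hx)
    refine ((((hF x hx).fun_pow 2).log (pow_ne_zero 2 (hr x hx).ne')).congr_of_mem
      (fun y hy => by rw [hθ y hy]) hx).congr_deriv ?_
    field_simp [(hr x hx).ne']
    ring
  intro x hx
  rw [derivWithin_congr hlog (hlog hx)]
  refine ((((hG x hx).const_mul 2).fun_div (hF x hx) (hr x hx).ne').derivWithin (hs x hx)).trans ?_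
  ring

section

variable {a b : ℝ} {r F G : ℝ → ℝ}

theorem integral_deriv_mul_sq_eq_neg_two_mul (hab : a ≤ b) {w w' : ℝ → ℝ}
    (hw : ∀ x ∈ Icc a b, HasDerivWithinAt w (w' x) (Icc a b) x)
    (hw' : ContinuousOn w' (Icc a b))
    (hG : ∀ x ∈ Icc a b, HasDerivWithinAt F (G x) (Icc a b) x) (hGc : ContinuousOn G (Icc a b))
    (hFa : F a = 0) (hFb : F b = 0) :
    ∫ x in a..b, w' x * F x ^ 2 = -2 * ∫ x in a..b, w x * (F x * G x) := by
  rw [← uIcc_of_le hab] at hw hw' hG hGc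
  have hFc : ContinuousOn F (uIcc a b) := fun x hx => (hG x hx).continuousWithinAt
  have hF2 : ∀ x ∈ uIcc a b,
      HasDerivWithinAt (fun y => F y ^ 2) (2 * (F x * G x)) (uIcc a b) x :=
    fun x hx => ((hG x hx).fun_pow 2).congr_deriv (by ring)
  have ibp := integral_mul_deriv_eq_deriv_mul_of_hasDerivWithinAt hw hF2
    hw'.intervalIntegrable (by apply ContinuousOn.intervalIntegrable; fun_prop)
  simp only [hFa, hFb, mul_left_comm (w _) 2, integral_const_mul] at ibp
  linarith

theorem four_mul_integral_sq_le (hab : a ≤ b) (hr : ∀ x ∈ Icc a b, 0 < r x)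
    (hF : ∀ x ∈ Icc a b, HasDerivWithinAt r (F x) (Icc a b) x)
    (hG : ∀ x ∈ Icc a b, HasDerivWithinAt F (G x) (Icc a b) x) (hGc : ContinuousOn G (Icc a b))
    (hFa : F a = 0) (hFb : F b = 0) :
    4 * ∫ x in a..b, G x ^ 2
      ≤ ∫ x in a..b, r x ^ 2 * (2 * (G x * r x - F x ^ 2) / r x ^ 2) ^ 2 := by
  rw [← uIcc_of_le hab] at hr hF hG hGc
  have hrc : ContinuousOn r (uIcc a b) := fun x hx => (hF x hx).continuousWithinAt
  have hFc : ContinuousOn F (uIcc a b) := fun x hx => (hG x hx).continuousWithinAt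
  have hr0 : ∀ x ∈ uIcc a b, r x ≠ 0 := fun x hx => (hr x hx).ne'
  have hr0sq : ∀ x ∈ uIcc a b, r x ^ 2 ≠ 0 := fun x hx => pow_ne_zero 2 (hr0 x hx)
  have hF3 : ∀ x ∈ uIcc a b,
      HasDerivWithinAt (fun y => F y ^ 3) (3 * F x ^ 2 * G x) (uIcc a b) x :=
    fun x hx => ((hG x hx).fun_pow 3).congr_deriv (by ring)
  have hRc : ContinuousOn (fun x => r x ^ 2 * (2 * (G x * r x - F x ^ 2) / r x ^ 2) ^ 2)
      (uIcc a b) := by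
    fun_prop (disch := assumption)
  have hΨc : ContinuousOn (fun x => 3 * F x ^ 2 * G x * (r x)⁻¹ + F x ^ 3 * (-F x / r x ^ 2))
      (uIcc a b) := by
    fun_prop (disch := assumption)
  have ibp := integral_deriv_mul_eq_sub_of_hasDerivWithinAt hF3
    (fun x hx => (hF x hx).fun_inv (hr0 x hx))
    (by apply ContinuousOn.intervalIntegrable; fun_prop)
    (by apply ContinuousOn.intervalIntegrable; fun_prop (disch := assumption))
  rw [uIcc_of_le hab] at hr
  calc 4 * ∫ x in a..b, G x ^ 2 = ∫ x in a..b, 4 * G x ^ 2 := (integral_const_mul _ _).symm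
    _ ≤ ∫ x in a..b, (r x ^ 2 * (2 * (G x * r x - F x ^ 2) / r x ^ 2) ^ 2
          + 8 / 3 * (3 * F x ^ 2 * G x * (r x)⁻¹ + F x ^ 3 * (-F x / r x ^ 2))) :=
      integral_mono_on hab (by apply ContinuousOn.intervalIntegrable; fun_prop)
        (by apply ContinuousOn.intervalIntegrable; fun_prop)
        fun x hx => four_mul_sq_le_add_deriv_cube_div (hr x hx)
    _ = ∫ x in a..b, r x ^ 2 * (2 * (G x * r x - F x ^ 2) / r x ^ 2) ^ 2 := by
      rw [integral_add hRc.intervalIntegrable (hΨc.intervalIntegrable.const_mul _),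
        integral_const_mul, ibp, hFa, hFb]
      ring

theorem two_mul_integral_deriv_mul_sq_le (hab : a ≤ b) {μ ε : ℝ} (hε : 0 < ε)
    {w w' : ℝ → ℝ} (hr : ∀ x ∈ Icc a b, 0 < r x)
    (hF : ∀ x ∈ Icc a b, HasDerivWithinAt r (F x) (Icc a b) x)
    (hG : ∀ x ∈ Icc a b, HasDerivWithinAt F (G x) (Icc a b) x) (hGc : ContinuousOn G (Icc a b))
    (hFa : F a = 0) (hFb : F b = 0)
    (hw : ∀ x ∈ Icc a b, HasDerivWithinAt w (w' x) (Icc a b) x)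
    (hw' : ContinuousOn w' (Icc a b)) :
    2 * μ * ∫ x in a..b, w' x * F x ^ 2
      ≤ ε * (∫ x in a..b, r x ^ 2 * (2 * (G x * r x - F x ^ 2) / r x ^ 2) ^ 2)
        + μ ^ 2 * (⨆ x : Icc a b, |w x|) ^ 2 / ε * ∫ x in a..b, F x ^ 2 := by
  set M := ⨆ x : Icc a b, |w x|
  have hFc : ContinuousOn F (Icc a b) := fun x hx => (hG x hx).continuousWithinAt
  have hwc : ContinuousOn w (Icc a b) := fun x hx => (hw x hx).continuousWithinAt
  have hwM : ∀ x ∈ Icc a b, w x ^ 2 ≤ M ^ 2 := fun x hx =>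
    sq_le_sq' (neg_le_of_abs_le (isCompact_Icc.abs_le_iSup_abs hwc hx))
      (le_of_abs_le (isCompact_Icc.abs_le_iSup_abs hwc hx))
  have hG2 := four_mul_integral_sq_le hab hr hF hG hGc hFa hFb
  calc 2 * μ * ∫ x in a..b, w' x * F x ^ 2
      = ∫ x in a..b, -4 * μ * (w x * (F x * G x)) := by
        rw [integral_deriv_mul_sq_eq_neg_two_mul hab hw hw' hG hGc hFa hFb, integral_const_mul]
        ring
    _ ≤ ∫ x in a..b, (4 * ε * G x ^ 2 + μ ^ 2 * M ^ 2 / ε * F x ^ 2) :=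
        integral_mono_on hab (by apply ContinuousOn.intervalIntegrable_of_Icc hab; fun_prop)
          (by apply ContinuousOn.intervalIntegrable_of_Icc hab; fun_prop)
          fun x hx => neg_four_mul_le_of_sq_le hε (hwM x hx)
    _ = ε * (4 * ∫ x in a..b, G x ^ 2) + μ ^ 2 * M ^ 2 / ε * ∫ x in a..b, F x ^ 2 := by
        rw [integral_add (by apply ContinuousOn.intervalIntegrable_of_Icc hab; fun_prop)
          (by apply ContinuousOn.intervalIntegrable_of_Icc hab; fun_prop),
          integral_const_mul, integral_const_mul]
        ring
    _ ≤ _ := by gcongr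

end

theorem stmt_11 (a b μ ε : ℝ) (hab : a < b) (hε : 0 < ε) (θ θ' θ'' w w' : ℝ → ℝ)
    (hpos : ∀ x ∈ Icc a b, 0 < θ x)
    (hθ' : ∀ x ∈ Icc a b, HasDerivWithinAt θ (θ' x) (Icc a b) x)
    (hθ'' : ∀ x ∈ Icc a b, HasDerivWithinAt θ' (θ'' x) (Icc a b) x)
    (hθcont : ContinuousOn θ'' (Icc a b))
    (hba : θ' a = 0) (hbb : θ' b = 0)
    (hw' : ∀ x ∈ Icc a b, HasDerivWithinAt w (w' x) (Icc a b) x)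
    (hwcont : ContinuousOn w' (Icc a b)) :
    μ / 2 * (∫ x in a..b, (θ' x) ^ 2 / θ x * w' x)
      ≤ ε * (∫ x in a..b,
          θ x * (derivWithin (derivWithin (fun y => Real.log (θ y)) (Icc a b)) (Icc a b) x) ^ 2)
        + 13 * μ ^ 2 / (8 * ε) * (⨆ x : Icc a b, |w x|) ^ 2
          * ∫ x in a..b, (derivWithin (fun y => Real.sqrt (θ y)) (Icc a b) x) ^ 2 := by
  have hI : uIcc a b = Icc a b := uIcc_of_le hab.le
  set F := fun x => θ' x / (2 * √(θ x))
  have hr : ∀ x ∈ Icc a b, 0 < √(θ x) := fun x hx => Real.sqrt_pos.2 (hpos x hx)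
  have hF : ∀ x ∈ Icc a b, HasDerivWithinAt (fun y => √(θ y)) (F x) (Icc a b) x :=
    fun x hx => (hθ' x hx).sqrt (hpos x hx).ne'
  obtain ⟨G, hGc, hG⟩ := exists_continuousOn_hasDerivWithinAt_div_sqrt hpos hθ' hθ'' hθcont
  have hlog := eqOn_derivWithin_derivWithin_log (uniqueDiffOn_Icc hab)
    (fun x hx => (Real.sq_sqrt (hpos x hx).le).symm) hr hF hG
  have key := two_mul_integral_deriv_mul_sq_le hab.le (μ := μ) hε hr hF hG hGc
    (by simp [F, hba]) (by simp [F, hbb]) hw' hwcont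
  have hθF : ∫ x in a..b, θ' x ^ 2 / θ x * w' x = 4 * ∫ x in a..b, w' x * F x ^ 2 := by
    rw [← integral_const_mul]
    exact integral_congr fun x hx => by
      simp only [F, sq_div_eq_four_mul_sq_div_two_mul_sqrt (hpos x (hI ▸ hx))]; ring
  have hθL : ∫ x in a..b, θ x * (derivWithin (derivWithin (fun y => Real.log (θ y))
      (Icc a b)) (Icc a b) x) ^ 2
      = ∫ x in a..b, √(θ x) ^ 2 * (2 * (G x * √(θ x) - F x ^ 2) / √(θ x) ^ 2) ^ 2 :=
    integral_congr fun x hx => by simp only [hlog (hI ▸ hx), Real.sq_sqrt (hpos x (hI ▸ hx)).le]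
  have hrF : ∫ x in a..b, (derivWithin (fun y => √(θ y)) (Icc a b) x) ^ 2
      = ∫ x in a..b, F x ^ 2 :=
    integral_congr fun x hx => by
      rw [(hF x (hI ▸ hx)).derivWithin (uniqueDiffOn_Icc hab x (hI ▸ hx))]
  rw [hθF, hθL, hrF]
  refine (show μ / 2 * (4 * ∫ x in a..b, w' x * F x ^ 2) = _ by ring).trans_le key |>.trans ?_
  gcongr _ + ?_ * _
  · exact integral_nonneg hab.le fun x _ => sq_nonneg _
  · field_simp
    nlinarith [sq_nonneg (μ * ⨆ x : Icc a b, |w x|)]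
end

section
/- Let $a<b$, $T>0$, $\mu\in\mathbb{R}$, and let $u\in C^3([0,T]\times[a,b])$, $\theta\in C^{1,2}([0,T]\times[a,b])$ with $\theta>0$ solve the system $u_{tt}-u_{xx}=\mu\theta_x$, $\theta_t-\theta_{xx}=\mu\theta u_{tx}$ with $u(\cdot,a)=u(\cdot,b)=0$, $\theta_x(\cdot,a)=\theta_x(\cdot,b)=0$. Set $\tau=\log\theta$. Then for all $t\in[0,T]$: $\frac12\int_a^b u_t^2\,dx + \frac12\int_a^b u_x^2\,dx + \int_a^b(\theta-\tau)\,dx + \int_0^t\int_a^b\tau_x^2\,dx\,ds = \frac12\int_a^b u_t(0,\cdot)^2dx + \frac12\int_a^b u_x(0,\cdot)^2dx + \int_a^b(\theta(0,\cdot)-\tau(0,\cdot))\,dx$. -/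
/-!
Multiply the wave equation by `u_t` and the heat equation by `1 - 1/θ`. After substituting the
equations, the time derivative of the density `u_t²/2 + u_x²/2 + θ - log θ` plus the dissipation
`(θ_x/θ)²` is the `x`-derivative of the flux `u_t u_x + μ u_t (θ - 1) + θ_x - θ_x/θ`, which vanishes
at `a` and `b` because `θ_x = 0` there and `u_t = 0` (as `u = 0` there). Integrating over `[a, b]`
and then over `[0, t]`, exchanging the integrals by Fubini, gives the identity.

The computation needs `∂ₜ u_x`, which is not given directly: it equals `u_tx`, because the
rectangle increment of `u` is the double integral of `u_tx`.
-/

open Set MeasureTheory intervalIntegral Function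

theorem ContinuousOn.exists_continuous_eqOn {X : Type*} [TopologicalSpace X] [NormalSpace X]
    {K : Set X} {F : X → ℝ} (hF : ContinuousOn F K) (hK : IsClosed K) :
    ∃ G : X → ℝ, Continuous G ∧ EqOn G F K := by
  obtain ⟨g, hg⟩ := ContinuousMap.exists_restrict_eq hK ⟨K.domRestrict F, hF.domRestrict⟩
  exact ⟨g, g.continuous, fun p hp => congrFun (congrArg ContinuousMap.toFun hg) ⟨p, hp⟩⟩

theorem integral_eq_sub_of_hasDerivWithinAt_Icc_s13 {f f' : ℝ → ℝ} {c d : ℝ} (hcd : c ≤ d)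
    (hf : ∀ x ∈ Icc c d, HasDerivWithinAt f (f' x) (Icc c d) x)
    (hf' : ContinuousOn f' (Icc c d)) : ∫ x in c..d, f' x = f d - f c :=
  integral_eq_sub_of_hasDeriv_right_of_le hcd (fun x hx => (hf x hx).continuousWithinAt)
    (fun x hx => ((hf x (Ioo_subset_Icc_self hx)).hasDerivAt
      (Icc_mem_nhds hx.1 hx.2)).hasDerivWithinAt)
    (hf'.intervalIntegrable_of_Icc hcd)

theorem intervalIntegral_integral_swap_of_continuousOn_s13 {F : ℝ → ℝ → ℝ} {p q c d : ℝ}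
    (hpq : p ≤ q) (hcd : c ≤ d) (hF : ContinuousOn (uncurry F) (Icc p q ×ˢ Icc c d)) :
    ∫ s in p..q, ∫ x in c..d, F s x = ∫ x in c..d, ∫ s in p..q, F s x := by
  simp only [intervalIntegral.integral_of_le hpq, intervalIntegral.integral_of_le hcd]
  refine integral_integral_swap ?_
  rw [Measure.prod_restrict]
  exact (hF.integrableOn_compact (isCompact_Icc.prod isCompact_Icc)).mono_set
    (prod_mono Ioc_subset_Icc_self Ioc_subset_Icc_self)

theorem integral_sub_eq_integral_integral_of_hasDerivWithinAt {f f' : ℝ → ℝ → ℝ}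
    {t₀ t₁ a b : ℝ} (ht : t₀ ≤ t₁) (hab : a ≤ b)
    (hf : ∀ s ∈ Icc t₀ t₁, ∀ x ∈ Icc a b, HasDerivWithinAt (f · x) (f' s x) (Icc t₀ t₁) s)
    (hf' : ContinuousOn (uncurry f') (Icc t₀ t₁ ×ˢ Icc a b)) :
    ∫ x in a..b, (f t₁ x - f t₀ x) = ∫ s in t₀..t₁, ∫ x in a..b, f' s x := by
  rw [intervalIntegral_integral_swap_of_continuousOn_s13 ht hab hf']
  refine integral_congr fun x hx => ?_
  rw [uIcc_of_le hab] at hx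
  exact (integral_eq_sub_of_hasDerivWithinAt_Icc_s13 ht (fun s hs => hf s hs x hx)
    (hf'.uncurry_right x hx)).symm

section MixedPartials

variable {u ut ux utx : ℝ → ℝ → ℝ} {t₀ t₁ a b : ℝ}

theorem sub_sub_sub_eq_integral_integral {t y : ℝ} (ht : t ∈ Icc t₀ t₁) (hy : y ∈ Icc a b)
    (hut : ∀ s ∈ Icc t₀ t₁, ∀ x ∈ Icc a b, HasDerivWithinAt (u · x) (ut s x) (Icc t₀ t₁) s)
    (hutx : ∀ s ∈ Icc t₀ t₁, ∀ x ∈ Icc a b, HasDerivWithinAt (ut s) (utx s x) (Icc a b) x)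
    (hut_cont : ContinuousOn (uncurry ut) (Icc t₀ t₁ ×ˢ Icc a b))
    (hutx_cont : ContinuousOn (uncurry utx) (Icc t₀ t₁ ×ˢ Icc a b)) :
    u t y - u t₀ y - (u t a - u t₀ a) = ∫ x in a..y, ∫ s in t₀..t, utx s x := by
  have hI : Icc t₀ t ⊆ Icc t₀ t₁ := Icc_subset_Icc_right ht.2
  have hJ : Icc a y ⊆ Icc a b := Icc_subset_Icc_right hy.2
  have hut_cont' (x : ℝ) (hx : x ∈ Icc a b) : ContinuousOn (ut · x) (Icc t₀ t) :=
    (hut_cont.uncurry_right x hx).mono hI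
  have ftc (x : ℝ) (hx : x ∈ Icc a b) : ∫ s in t₀..t, ut s x = u t x - u t₀ x :=
    integral_eq_sub_of_hasDerivWithinAt_Icc_s13 ht.1 (fun s hs => (hut s (hI hs) x hx).mono hI)
      (hut_cont' x hx)
  have ha : a ∈ Icc a b := ⟨le_rfl, hy.1.trans hy.2⟩
  rw [← ftc y hy, ← ftc a ha, ← integral_sub ((hut_cont' y hy).intervalIntegrable_of_Icc ht.1)
    ((hut_cont' a ha).intervalIntegrable_of_Icc ht.1)]
  exact integral_sub_eq_integral_integral_of_hasDerivWithinAt (f := fun x s => ut s x) hy.1 ht.1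
    (fun x hx s hs => (hutx s (hI hs) x (hJ hx)).mono hJ)
    (hutx_cont.comp continuous_swap.continuousOn fun p hp => ⟨hI hp.2, hJ hp.1⟩)

theorem hasDerivWithinAt_of_mixed_partial (hab : a < b)
    (hut : ∀ s ∈ Icc t₀ t₁, ∀ x ∈ Icc a b, HasDerivWithinAt (u · x) (ut s x) (Icc t₀ t₁) s)
    (hux : ∀ s ∈ Icc t₀ t₁, ∀ x ∈ Icc a b, HasDerivWithinAt (u s) (ux s x) (Icc a b) x)
    (hutx : ∀ s ∈ Icc t₀ t₁, ∀ x ∈ Icc a b, HasDerivWithinAt (ut s) (utx s x) (Icc a b) x)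
    (hut_cont : ContinuousOn (uncurry ut) (Icc t₀ t₁ ×ˢ Icc a b))
    (hutx_cont : ContinuousOn (uncurry utx) (Icc t₀ t₁ ×ˢ Icc a b)) :
    ∀ t ∈ Icc t₀ t₁, ∀ x ∈ Icc a b, HasDerivWithinAt (ux · x) (utx t x) (Icc t₀ t₁) t := by
  obtain ⟨U, hU_cont, hU⟩ := hutx_cont.exists_continuous_eqOn (isClosed_Icc.prod isClosed_Icc)
  have hV_cont (t : ℝ) : Continuous fun x => ∫ s in t₀..t, U (s, x) :=
    continuous_parametric_intervalIntegral_of_continuous' (f := fun x s => U (s, x))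
      (hU_cont.comp continuous_swap) _ _
  have hrep : ∀ t ∈ Icc t₀ t₁, ∀ x ∈ Icc a b, ux t x = ux t₀ x + ∫ s in t₀..t, U (s, x) := by
    intro t ht x hx
    have ht₀ : t₀ ∈ Icc t₀ t₁ := ⟨le_rfl, ht.1.trans ht.2⟩
    have hu : EqOn (u t)
        (fun y => u t₀ y + (u t a - u t₀ a) + ∫ x in a..y, ∫ s in t₀..t, U (s, x)) (Icc a b) := by
      intro y hy
      have hUy : ∫ x in a..y, ∫ s in t₀..t, U (s, x) = ∫ x in a..y, ∫ s in t₀..t, utx s x := by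
        refine integral_congr fun x hx => integral_congr fun s hs => hU ⟨?_, ?_⟩
        · exact Icc_subset_Icc_right ht.2 (uIcc_of_le ht.1 ▸ hs)
        · exact Icc_subset_Icc_right hy.2 (uIcc_of_le hy.1 ▸ hx)
      have := sub_sub_sub_eq_integral_integral ht hy hut hutx hut_cont hutx_cont
      beta_reduce
      linarith
    have hderiv : HasDerivWithinAt (u t) (ux t₀ x + ∫ s in t₀..t, U (s, x)) (Icc a b) x :=
      ((((hux t₀ ht₀ x hx).add_const _).add
        ((hV_cont t).integral_hasStrictDerivAt a x).hasDerivAt.hasDerivWithinAt).congr hu (hu hx))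
    exact (uniqueDiffOn_Icc hab x hx).eq_deriv _ (hux t ht x hx) hderiv
  intro t ht x hx
  have h : HasDerivWithinAt (fun s => ux t₀ x + ∫ r in t₀..s, U (r, x)) (U (t, x)) (Icc t₀ t₁) t :=
    (((hU_cont.comp (continuous_id.prodMk continuous_const)).integral_hasStrictDerivAt
      t₀ t).hasDerivAt.hasDerivWithinAt).const_add (ux t₀ x)
  rw [hU ⟨ht, hx⟩] at h
  exact h.congr (fun s hs => hrep s hs x hx) (hrep t ht x hx)

end MixedPartials

theorem hasDerivAt_energyFlux {ut ux θ θx : ℝ → ℝ} {μ x utt utx uxx θt θxx : ℝ}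
    (hut : HasDerivAt ut utx x) (hux : HasDerivAt ux uxx x) (hθ : HasDerivAt θ (θx x) x)
    (hθx : HasDerivAt θx θxx x) (hθ0 : θ x ≠ 0)
    (hwave : utt - uxx = μ * θx x) (hheat : θt - θxx = μ * θ x * utx) :
    HasDerivAt (fun y => ut y * ux y + μ * ut y * (θ y - 1) + θx y - θx y / θ y)
      (ut x * utt + ux x * utx + (θt - θt / θ x) + (θx x / θ x) ^ 2) x := by
  refine ((((hut.mul hux).add ((hut.const_mul μ).mul (hθ.sub_const 1))).add hθx).sub
    (hθx.div hθ hθ0)).congr_deriv ?_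
  rw [show utt = uxx + μ * θx x by linarith, show θt = θxx + μ * θ x * utx by linarith]
  field_simp
  ring

theorem integral_energyRate_add_dissipation_eq_zero {ut ux θ θx utt utx uxx θt θxx : ℝ → ℝ}
    {a b μ : ℝ} (hab : a ≤ b)
    (hut : ∀ x ∈ Icc a b, HasDerivWithinAt ut (utx x) (Icc a b) x)
    (hux : ∀ x ∈ Icc a b, HasDerivWithinAt ux (uxx x) (Icc a b) x)
    (hθ : ∀ x ∈ Icc a b, HasDerivWithinAt θ (θx x) (Icc a b) x)
    (hθx : ∀ x ∈ Icc a b, HasDerivWithinAt θx (θxx x) (Icc a b) x)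
    (hθ0 : ∀ x ∈ Icc a b, θ x ≠ 0)
    (hutt_cont : ContinuousOn utt (Icc a b)) (hutx_cont : ContinuousOn utx (Icc a b))
    (hθt_cont : ContinuousOn θt (Icc a b))
    (hwave : ∀ x ∈ Ioo a b, utt x - uxx x = μ * θx x)
    (hheat : ∀ x ∈ Ioo a b, θt x - θxx x = μ * θ x * utx x)
    (ha : ut a = 0 ∧ θx a = 0) (hb : ut b = 0 ∧ θx b = 0) :
    ∫ x in a..b, (ut x * utt x + ux x * utx x + (θt x - θt x / θ x) + (θx x / θ x) ^ 2) = 0 := by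
  have cont {f f' : ℝ → ℝ} (hf : ∀ x ∈ Icc a b, HasDerivWithinAt f (f' x) (Icc a b) x) :
      ContinuousOn f (Icc a b) := fun x hx => (hf x hx).continuousWithinAt
  have hflux : ∀ x ∈ Ioo a b, HasDerivWithinAt
      (fun y => ut y * ux y + μ * ut y * (θ y - 1) + θx y - θx y / θ y)
      (ut x * utt x + ux x * utx x + (θt x - θt x / θ x) + (θx x / θ x) ^ 2) (Ioi x) x := by
    intro x hx
    have hnhds : Icc a b ∈ nhds x := Icc_mem_nhds hx.1 hx.2
    have hx' : x ∈ Icc a b := Ioo_subset_Icc_self hx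
    exact (hasDerivAt_energyFlux ((hut x hx').hasDerivAt hnhds) ((hux x hx').hasDerivAt hnhds)
      ((hθ x hx').hasDerivAt hnhds) ((hθx x hx').hasDerivAt hnhds) (hθ0 x hx')
      (hwave x hx) (hheat x hx)).hasDerivWithinAt
  have hint : ContinuousOn
      (fun x => ut x * utt x + ux x * utx x + (θt x - θt x / θ x) + (θx x / θ x) ^ 2) (Icc a b) :=
    (((cont hut).mul hutt_cont).add ((cont hux).mul hutx_cont) |>.add
      (hθt_cont.sub (hθt_cont.div (cont hθ) hθ0))).add (((cont hθx).div (cont hθ) hθ0).pow 2)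
  rw [integral_eq_sub_of_hasDeriv_right_of_le hab ((((cont hut).mul (cont hux)).add
    ((continuousOn_const.mul (cont hut)).mul ((cont hθ).sub continuousOn_const))).add (cont hθx)
    |>.sub ((cont hθx).div (cont hθ) hθ0)) hflux (hint.intervalIntegrable_of_Icc hab)]
  simp [ha, hb]

theorem HasDerivWithinAt.energyDensity {p q θ : ℝ → ℝ} {p' q' θ' t : ℝ} {s : Set ℝ}
    (hp : HasDerivWithinAt p p' s t) (hq : HasDerivWithinAt q q' s t)
    (hθ : HasDerivWithinAt θ θ' s t) (hθ0 : θ t ≠ 0) :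
    HasDerivWithinAt (fun r => (1/2) * p r ^ 2 + (1/2) * q r ^ 2 + (θ r - Real.log (θ r)))
      (p t * p' + q t * q' + (θ' - θ' / θ t)) s t :=
  ((((hp.pow 2).const_mul _).add ((hq.pow 2).const_mul _)).add (hθ.sub (hθ.log hθ0))).congr_deriv
    (by ring)

noncomputable def thermoelasticEnergy (a b : ℝ) (v w θ : ℝ → ℝ) : ℝ :=
  (1/2) * (∫ x in a..b, v x ^ 2) + (1/2) * (∫ x in a..b, w x ^ 2)
    + ∫ x in a..b, (θ x - Real.log (θ x))

theorem integral_energyDensity {v w θ : ℝ → ℝ} {a b : ℝ} (hab : a ≤ b)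
    (hv : ContinuousOn v (Icc a b)) (hw : ContinuousOn w (Icc a b))
    (hθ : ContinuousOn θ (Icc a b)) (hθ0 : ∀ x ∈ Icc a b, θ x ≠ 0) :
    ∫ x in a..b, ((1/2) * v x ^ 2 + (1/2) * w x ^ 2 + (θ x - Real.log (θ x)))
      = thermoelasticEnergy a b v w θ := by
  have hint {f : ℝ → ℝ} (hf : ContinuousOn f (Icc a b)) : IntervalIntegrable f volume a b :=
    hf.intervalIntegrable_of_Icc hab
  have hv2 : IntervalIntegrable (fun x => (1/2) * v x ^ 2) volume a b :=
    hint (continuousOn_const.mul (hv.pow 2))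
  have hw2 : IntervalIntegrable (fun x => (1/2) * w x ^ 2) volume a b :=
    hint (continuousOn_const.mul (hw.pow 2))
  have hθ' : IntervalIntegrable (fun x => θ x - Real.log (θ x)) volume a b :=
    hint (hθ.sub (hθ.log hθ0))
  rw [integral_add (hv2.add hw2) hθ', integral_add hv2 hw2, intervalIntegral.integral_const_mul,
    intervalIntegral.integral_const_mul, thermoelasticEnergy]

theorem thermoelasticEnergy_add_integral_eq_of_balance {ut utt ux utx θ θt D : ℝ → ℝ → ℝ}
    {t₀ t₁ a b t : ℝ} (ht : t ∈ Icc t₀ t₁) (hab : a ≤ b)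
    (hutt : ∀ s ∈ Icc t₀ t₁, ∀ x ∈ Icc a b, HasDerivWithinAt (ut · x) (utt s x) (Icc t₀ t₁) s)
    (huxt : ∀ s ∈ Icc t₀ t₁, ∀ x ∈ Icc a b, HasDerivWithinAt (ux · x) (utx s x) (Icc t₀ t₁) s)
    (hθt : ∀ s ∈ Icc t₀ t₁, ∀ x ∈ Icc a b, HasDerivWithinAt (θ · x) (θt s x) (Icc t₀ t₁) s)
    (hθ0 : ∀ s ∈ Icc t₀ t₁, ∀ x ∈ Icc a b, θ s x ≠ 0)
    (hut_cont : ContinuousOn (uncurry ut) (Icc t₀ t₁ ×ˢ Icc a b))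
    (hutt_cont : ContinuousOn (uncurry utt) (Icc t₀ t₁ ×ˢ Icc a b))
    (hux_cont : ContinuousOn (uncurry ux) (Icc t₀ t₁ ×ˢ Icc a b))
    (hutx_cont : ContinuousOn (uncurry utx) (Icc t₀ t₁ ×ˢ Icc a b))
    (hθ_cont : ContinuousOn (uncurry θ) (Icc t₀ t₁ ×ˢ Icc a b))
    (hθt_cont : ContinuousOn (uncurry θt) (Icc t₀ t₁ ×ˢ Icc a b))
    (hD_cont : ContinuousOn (uncurry D) (Icc t₀ t₁ ×ˢ Icc a b))
    (hbal : ∀ s ∈ Ioo t₀ t₁, ∫ x in a..b,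
      (ut s x * utt s x + ux s x * utx s x + (θt s x - θt s x / θ s x) + D s x) = 0) :
    thermoelasticEnergy a b (ut t) (ux t) (θ t) + ∫ s in t₀..t, ∫ x in a..b, D s x
      = thermoelasticEnergy a b (ut t₀) (ux t₀) (θ t₀) := by
  have hI : Icc t₀ t ⊆ Icc t₀ t₁ := Icc_subset_Icc_right ht.2
  have ht₀ : t₀ ∈ Icc t₀ t₁ := ⟨le_rfl, ht.1.trans ht.2⟩
  have hrate : ContinuousOn (uncurry fun s x => ut s x * utt s x + ux s x * utx s x
      + (θt s x - θt s x / θ s x)) (Icc t₀ t₁ ×ˢ Icc a b) :=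
    ((hut_cont.mul hutt_cont).add (hux_cont.mul hutx_cont)).add
      (hθt_cont.sub (hθt_cont.div hθ_cont fun p hp => hθ0 _ hp.1 _ hp.2))
  have hrate_eq : EqOn (fun s => ∫ x in a..b, (ut s x * utt s x + ux s x * utx s x
      + (θt s x - θt s x / θ s x))) (fun s => -∫ x in a..b, D s x) (Ioo t₀ t) := by
    intro s hs
    have hs' : s ∈ Icc t₀ t₁ := ⟨hs.1.le, hs.2.le.trans ht.2⟩
    have := hbal s ⟨hs.1, hs.2.trans_le ht.2⟩
    rw [integral_add ((hrate.uncurry_left s hs').intervalIntegrable_of_Icc hab)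
      ((hD_cont.uncurry_left s hs').intervalIntegrable_of_Icc hab)] at this
    exact eq_neg_of_add_eq_zero_left this
  have hdens (s : ℝ) (hs : s ∈ Icc t₀ t₁) :
      ContinuousOn (fun x => (1/2) * ut s x ^ 2 + (1/2) * ux s x ^ 2 + (θ s x - Real.log (θ s x)))
        (Icc a b) :=
    ((continuousOn_const.mul ((hut_cont.uncurry_left s hs).pow 2)).add (continuousOn_const.mul
      ((hux_cont.uncurry_left s hs).pow 2))).add
      ((hθ_cont.uncurry_left s hs).sub ((hθ_cont.uncurry_left s hs).log (hθ0 s hs)))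
  have hE := integral_sub_eq_integral_integral_of_hasDerivWithinAt ht.1 hab
    (fun s hs x hx => ((hutt s (hI hs) x hx).energyDensity (huxt s (hI hs) x hx)
      (hθt s (hI hs) x hx) (hθ0 s (hI hs) x hx)).mono hI)
    (hrate.mono (prod_mono hI subset_rfl))
  rw [integral_congr_Ioo_of_le ht.1 hrate_eq, intervalIntegral.integral_neg,
    integral_sub ((hdens t ht).intervalIntegrable_of_Icc hab)
      ((hdens t₀ ht₀).intervalIntegrable_of_Icc hab),
    integral_energyDensity hab (hut_cont.uncurry_left t ht) (hux_cont.uncurry_left t ht)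
      (hθ_cont.uncurry_left t ht) (hθ0 t ht),
    integral_energyDensity hab (hut_cont.uncurry_left t₀ ht₀) (hux_cont.uncurry_left t₀ ht₀)
      (hθ_cont.uncurry_left t₀ ht₀) (hθ0 t₀ ht₀)] at hE
  linarith

theorem stmt_13 (a b T μ : ℝ) (hab : a < b) (hT : 0 < T)
    (u ut utt ux uxx utx θ θt θx θxx : ℝ → ℝ → ℝ)
    (hpos : ∀ t ∈ Icc 0 T, ∀ x ∈ Icc a b, 0 < θ t x)
    (hut : ∀ t ∈ Icc 0 T, ∀ x ∈ Icc a b,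
      HasDerivWithinAt (fun s => u s x) (ut t x) (Icc 0 T) t)
    (hutt : ∀ t ∈ Icc 0 T, ∀ x ∈ Icc a b,
      HasDerivWithinAt (fun s => ut s x) (utt t x) (Icc 0 T) t)
    (hux : ∀ t ∈ Icc 0 T, ∀ x ∈ Icc a b,
      HasDerivWithinAt (u t) (ux t x) (Icc a b) x)
    (huxx : ∀ t ∈ Icc 0 T, ∀ x ∈ Icc a b,
      HasDerivWithinAt (ux t) (uxx t x) (Icc a b) x)
    (hutx : ∀ t ∈ Icc 0 T, ∀ x ∈ Icc a b,
      HasDerivWithinAt (ut t) (utx t x) (Icc a b) x)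
    (hθt : ∀ t ∈ Icc 0 T, ∀ x ∈ Icc a b,
      HasDerivWithinAt (fun s => θ s x) (θt t x) (Icc 0 T) t)
    (hθx : ∀ t ∈ Icc 0 T, ∀ x ∈ Icc a b,
      HasDerivWithinAt (θ t) (θx t x) (Icc a b) x)
    (hθxx : ∀ t ∈ Icc 0 T, ∀ x ∈ Icc a b,
      HasDerivWithinAt (θx t) (θxx t x) (Icc a b) x)
    (hcont : ContinuousOn (fun p : ℝ × ℝ =>
      (utt p.1 p.2, uxx p.1 p.2, utx p.1 p.2, θt p.1 p.2, θxx p.1 p.2, θx p.1 p.2,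
        ut p.1 p.2, ux p.1 p.2, θ p.1 p.2)) (Icc 0 T ×ˢ Icc a b))
    (hwave : ∀ t ∈ Ioo 0 T, ∀ x ∈ Ioo a b, utt t x - uxx t x = μ * θx t x)
    (hheat : ∀ t ∈ Ioo 0 T, ∀ x ∈ Ioo a b, θt t x - θxx t x = μ * θ t x * utx t x)
    (hbd : ∀ t ∈ Icc 0 T, u t a = 0 ∧ u t b = 0 ∧ θx t a = 0 ∧ θx t b = 0) :
    ∀ t ∈ Icc 0 T,
      (1/2) * (∫ x in a..b, (ut t x) ^ 2) + (1/2) * (∫ x in a..b, (ux t x) ^ 2)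
          + (∫ x in a..b, (θ t x - Real.log (θ t x)))
          + (∫ s in (0:ℝ)..t, ∫ x in a..b, (θx s x / θ s x) ^ 2)
        = (1/2) * (∫ x in a..b, (ut 0 x) ^ 2) + (1/2) * (∫ x in a..b, (ux 0 x) ^ 2)
          + (∫ x in a..b, (θ 0 x - Real.log (θ 0 x))) := by
  intro t ht
  have hθ0 : ∀ s ∈ Icc 0 T, ∀ x ∈ Icc a b, θ s x ≠ 0 := fun s hs x hx => (hpos s hs x hx).ne'
  have hutt_cont : ContinuousOn (uncurry utt) (Icc 0 T ×ˢ Icc a b) := hcont.fst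
  have hutx_cont : ContinuousOn (uncurry utx) (Icc 0 T ×ˢ Icc a b) := hcont.snd.snd.fst
  have hθt_cont : ContinuousOn (uncurry θt) (Icc 0 T ×ˢ Icc a b) := hcont.snd.snd.snd.fst
  have hθx_cont : ContinuousOn (uncurry θx) (Icc 0 T ×ˢ Icc a b) := hcont.snd.snd.snd.snd.snd.fst
  have hut_cont : ContinuousOn (uncurry ut) (Icc 0 T ×ˢ Icc a b) :=
    hcont.snd.snd.snd.snd.snd.snd.fst
  have hux_cont : ContinuousOn (uncurry ux) (Icc 0 T ×ˢ Icc a b) :=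
    hcont.snd.snd.snd.snd.snd.snd.snd.fst
  have hθ_cont : ContinuousOn (uncurry θ) (Icc 0 T ×ˢ Icc a b) :=
    hcont.snd.snd.snd.snd.snd.snd.snd.snd
  have hut_bd : ∀ s ∈ Icc 0 T, ut s a = 0 ∧ ut s b = 0 := by
    intro s hs
    have hzero {x} (hx : x ∈ Icc a b) (hu : ∀ r ∈ Icc 0 T, u r x = 0) : ut s x = 0 :=
      (uniqueDiffOn_Icc hT s hs).eq_deriv _ (hut s hs x hx)
        ((hasDerivWithinAt_const s _ 0).congr hu (hu s hs))
    exact ⟨hzero (left_mem_Icc.2 hab.le) fun r hr => (hbd r hr).1,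
      hzero (right_mem_Icc.2 hab.le) fun r hr => (hbd r hr).2.1⟩
  refine thermoelasticEnergy_add_integral_eq_of_balance (D := fun s x => (θx s x / θ s x) ^ 2)
    ht hab.le hutt (hasDerivWithinAt_of_mixed_partial hab hut hux hutx hut_cont hutx_cont) hθt
    hθ0 hut_cont hutt_cont hux_cont hutx_cont hθ_cont hθt_cont
    ((hθx_cont.div hθ_cont fun p hp => hθ0 _ hp.1 _ hp.2).pow 2) fun s hs => ?_
  have hs' : s ∈ Icc 0 T := Ioo_subset_Icc_self hs
  exact integral_energyRate_add_dissipation_eq_zero hab.le (hutx s hs') (huxx s hs') (hθx s hs')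
    (hθxx s hs') (hθ0 s hs') (hutt_cont.uncurry_left s hs') (hutx_cont.uncurry_left s hs')
    (hθt_cont.uncurry_left s hs') (hwave s hs) (hheat s hs) ⟨(hut_bd s hs').1, (hbd s hs').2.2.1⟩
    ⟨(hut_bd s hs').2, (hbd s hs').2.2.2⟩
end
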